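/- arXiv:1901.10624 — 7 statements merged into one kernel-verified Lean document; each statement's English description precedes it below -/
import Mathlib

section
/- Let V, Y, U be real Hilbert spaces, ι : V → Y a bounded linear map, a : V × V → ℝ a bounded coercive bilinear form (|a(v,w)| ≤ a_max‖v‖_V‖w‖_V and a(v,v) ≥ a_min‖v‖_V² with 0 < a_min ≤ a_max), B : U → Y bounded with ‖Bw‖_Y ≤ C_B‖w‖_U, and g' : Y → Y Lipschitz with constant L_g. Suppose f ∈ Y, u, u' ∈ U, and y, y', p, p' ∈ V satisfy a(y,v) = ⟪f + Bu, ιv⟫_Y and a(y',v) = ⟪f + Bu', ιv⟫_Y for all v ∈ V, and a(p,q) = ⟪g'(ιy), ιq⟫_Y and a(p',q) = ⟪g'(ιy'), ιq⟫_Y for all q ∈ V. Then ‖y − y'‖_V ≤ (‖ι‖ C_B / a_min) ‖u − u'‖_U and ‖p − p'‖_V ≤ (L_g ‖ι‖³ C_B / a_min²) ‖u − u'‖_U; in particular ‖y − y'‖_V + ‖p − p'‖_V ≤ (‖ι‖C_B/a_min)(1 + L_g‖ι‖²/a_min)‖u − u'‖_U. -/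
open scoped RealInnerProductSpace

lemma aux_div {V : Type*} [NormedAddCommGroup V] (a_min C : ℝ) (ha : 0 < a_min)
    (hC : 0 ≤ C) (v : V) (h : a_min * ‖v‖ ^ 2 ≤ C * ‖v‖) : ‖v‖ ≤ C / a_min := by
  rw [le_div_iff₀ ha]
  nlinarith [norm_nonneg v]

/-- Stability of auxiliary state and co-state solutions (Lemma 4.1, abstract form). -/
theorem stmt0
    {V Y U : Type*}
    [NormedAddCommGroup V] [InnerProductSpace ℝ V] [CompleteSpace V]
    [NormedAddCommGroup Y] [InnerProductSpace ℝ Y] [CompleteSpace Y]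
    [NormedAddCommGroup U] [InnerProductSpace ℝ U] [CompleteSpace U]
    (ι : V →L[ℝ] Y)
    (a : V →ₗ[ℝ] V →ₗ[ℝ] ℝ)
    (a_min a_max C_B L_g : ℝ)
    (ha_min : 0 < a_min) (hminmax : a_min ≤ a_max)
    (hbound : ∀ v w : V, |a v w| ≤ a_max * ‖v‖ * ‖w‖)
    (hcoer : ∀ v : V, a_min * ‖v‖ ^ 2 ≤ a v v)
    (B : U →L[ℝ] Y) (hB : ∀ w : U, ‖B w‖ ≤ C_B * ‖w‖)
    (g' : Y → Y) (hg : ∀ y₁ y₂ : Y, ‖g' y₁ - g' y₂‖ ≤ L_g * ‖y₁ - y₂‖)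
    (f : Y) (u u' : U) (y y' p p' : V)
    (hy : ∀ v : V, a y v = ⟪f + B u, ι v⟫)
    (hy' : ∀ v : V, a y' v = ⟪f + B u', ι v⟫)
    (hp : ∀ q : V, a p q = ⟪g' (ι y), ι q⟫)
    (hp' : ∀ q : V, a p' q = ⟪g' (ι y'), ι q⟫) :
    ‖y - y'‖ ≤ ‖ι‖ * C_B / a_min * ‖u - u'‖ ∧
    ‖p - p'‖ ≤ L_g * ‖ι‖ ^ 3 * C_B / a_min ^ 2 * ‖u - u'‖ ∧
    ‖y - y'‖ + ‖p - p'‖ ≤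
      ‖ι‖ * C_B / a_min * (1 + L_g * ‖ι‖ ^ 2 / a_min) * ‖u - u'‖ := by
  have hBnn : 0 ≤ C_B * ‖u - u'‖ := le_trans (norm_nonneg _) (hB (u - u'))
  -- state estimate
  have hae : a (y - y') (y - y') = ⟪B (u - u') , ι (y - y')⟫ := by
    simp only [map_sub, LinearMap.sub_apply, hy, hy', inner_sub_left, inner_add_left, inner_sub_right]
    ring
  have hych : a_min * ‖y - y'‖ ^ 2 ≤ (‖ι‖ * (C_B * ‖u - u'‖)) * ‖y - y'‖ := by
    calc a_min * ‖y - y'‖ ^ 2 ≤ a (y - y') (y - y') := hcoer _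
      _ = ⟪B (u - u') , ι (y - y')⟫ := hae
      _ ≤ ‖B (u - u')‖ * ‖ι (y - y')‖ := real_inner_le_norm _ _
      _ ≤ (C_B * ‖u - u'‖) * (‖ι‖ * ‖y - y'‖) :=
          mul_le_mul (hB _) (ι.le_opNorm _) (norm_nonneg _) hBnn
      _ = (‖ι‖ * (C_B * ‖u - u'‖)) * ‖y - y'‖ := by ring
  have h1' : ‖y - y'‖ ≤ ‖ι‖ * C_B / a_min * ‖u - u'‖ := by
    have h1 : ‖y - y'‖ ≤ ‖ι‖ * (C_B * ‖u - u'‖) / a_min :=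
      aux_div _ _ ha_min (by positivity) _ hych
    calc ‖y - y'‖ ≤ ‖ι‖ * (C_B * ‖u - u'‖) / a_min := h1
      _ = ‖ι‖ * C_B / a_min * ‖u - u'‖ := by ring
  -- co-state estimate
  have h2' : ‖p - p'‖ ≤ L_g * ‖ι‖ ^ 3 * C_B / a_min ^ 2 * ‖u - u'‖ := by
    by_cases hY : ∃ z : Y, z ≠ 0
    · obtain ⟨z, hz⟩ := hY
      have hzpos : 0 < ‖z‖ := norm_pos_iff.mpr hz
      have hL : 0 ≤ L_g := by
        have h0 : (0:ℝ) ≤ L_g * ‖z‖ := le_trans (norm_nonneg (g' z - g' 0)) (by simpa using hg z 0)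
        nlinarith [h0, hzpos]
      have hape : a (p - p') (p - p') = ⟪g' (ι y) - g' (ι y'), ι (p - p')⟫ := by
        simp only [map_sub, LinearMap.sub_apply, hp, hp', inner_sub_left, inner_sub_right]
      have hιy : ‖ι y - ι y'‖ ≤ ‖ι‖ * ‖y - y'‖ := by
        rw [← map_sub]; exact ι.le_opNorm _
      have hgn : 0 ≤ L_g * ‖ι y - ι y'‖ := by positivity
      have hpch : a_min * ‖p - p'‖ ^ 2 ≤ (‖ι‖ * (L_g * (‖ι‖ * ‖y - y'‖))) * ‖p - p'‖ := by
        calc a_min * ‖p - p'‖ ^ 2 ≤ a (p - p') (p - p') := hcoer _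
          _ = ⟪g' (ι y) - g' (ι y'), ι (p - p')⟫ := hape
          _ ≤ ‖g' (ι y) - g' (ι y')‖ * ‖ι (p - p')‖ := real_inner_le_norm _ _
          _ ≤ (L_g * ‖ι y - ι y'‖) * (‖ι‖ * ‖p - p'‖) :=
              mul_le_mul (hg _ _) (ι.le_opNorm _) (norm_nonneg _) hgn
          _ ≤ (L_g * (‖ι‖ * ‖y - y'‖)) * (‖ι‖ * ‖p - p'‖) := by
              have h0 : 0 ≤ ‖ι‖ * ‖p - p'‖ := by positivity
              exact mul_le_mul_of_nonneg_right
                (mul_le_mul_of_nonneg_left hιy hL) h0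
          _ = (‖ι‖ * (L_g * (‖ι‖ * ‖y - y'‖))) * ‖p - p'‖ := by ring
      have h2 : ‖p - p'‖ ≤ ‖ι‖ * (L_g * (‖ι‖ * ‖y - y'‖)) / a_min :=
        aux_div _ _ ha_min (by positivity) _ hpch
      have hmul : ‖ι‖ * (L_g * (‖ι‖ * ‖y - y'‖)) / a_min
          ≤ ‖ι‖ * (L_g * (‖ι‖ * (‖ι‖ * C_B / a_min * ‖u - u'‖))) / a_min := by
        gcongr
      calc ‖p - p'‖ ≤ ‖ι‖ * (L_g * (‖ι‖ * (‖ι‖ * C_B / a_min * ‖u - u'‖))) / a_min :=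
            h2.trans hmul
        _ = L_g * ‖ι‖ ^ 3 * C_B / a_min ^ 2 * ‖u - u'‖ := by ring
    · push_neg at hY
      have hsub : ∀ z : Y, z = 0 := hY
      have hιz : ∀ v : V, ι v = 0 := fun v => hsub _
      have hpe : a_min * ‖p - p'‖ ^ 2 ≤ 0 := by
        have : a (p - p') (p - p') = 0 := by
          simp only [map_sub, LinearMap.sub_apply, hp, hp', hιz, inner_zero_right]
          ring
        linarith [hcoer (p - p'), this.le]
      have hpz : ‖p - p'‖ = 0 := by
        by_contra h
        have hpos : 0 < ‖p - p'‖ := (norm_nonneg _).lt_of_ne (Ne.symm h)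
        nlinarith [mul_pos ha_min (pow_pos hpos 2)]
      have hιzero : ‖ι‖ = 0 := by
        have : ι = 0 := by ext v; simp [hιz]
        simp [this]
      rw [hpz, hιzero]
      simp
  refine ⟨h1', h2', ?_⟩
  have : ‖ι‖ * C_B / a_min * (1 + L_g * ‖ι‖ ^ 2 / a_min) * ‖u - u'‖
      = ‖ι‖ * C_B / a_min * ‖u - u'‖ + L_g * ‖ι‖ ^ 3 * C_B / a_min ^ 2 * ‖u - u'‖ := by
    field_simp
  linarith
end

section
/- Let V, Y, U be real Hilbert spaces, ι : V → Y a bounded linear map, a : V × V → ℝ a symmetric bounded coercive bilinear form (|a(v,w)| ≤ a_max‖v‖_V‖w‖_V and a(v,v) ≥ a_min‖v‖_V²), B : U → Y bounded with ‖Bw‖_Y ≤ C_B‖w‖_U, and g' : Y → Y Lipschitz with constant L_g. Let V_H ⊆ V be a closed subspace, u_H ∈ U, f ∈ Y. Let y(u_H), p(u_H) ∈ V satisfy a(y(u_H),v) = ⟪f + Bu_H, ιv⟫_Y and a(p(u_H),q) = ⟪g'(ι y(u_H)), ιq⟫_Y for all v, q ∈ V, and let y_H, p_H ∈ V_H satisfy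 a(y_H,v) = ⟪f + Bu_H, ιv⟫_Y and a(p_H,q) = ⟪g'(ι y_H), ιq⟫_Y for all v, q ∈ V_H. Assume 0 < H ≤ 1 and that there exist y_I, p_I ∈ V_H with ‖y(u_H) − y_I‖_V ≤ C_I H ‖f + Bu_H‖_Y and ‖p(u_H) − p_I‖_V ≤ C_I H ‖g'(ι y(u_H))‖_Y. Then there is a constant C depending only on a_min, a_max, ‖ι‖, L_g, C_I (not on H, f, u_H) such that ‖p(u_H) − p_H‖_V ≤ C H (‖f + Bu_H‖_Y + ‖g'(ι y_H)‖_Y). -/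
/-- If `m x² ≤ M x d` with `m > 0`, `x, d, M ≥ 0`, then `x ≤ (M/m) d`. -/
lemma quad_div_aux {m M x d : ℝ} (hm : 0 < m) (hx : 0 ≤ x) (hd : 0 ≤ d)
    (hM : 0 ≤ M) (h : m * x ^ 2 ≤ M * x * d) : x ≤ M / m * d := by
  rcases eq_or_lt_of_le hx with h0 | h0
  · rw [← h0]
    positivity
  · have h1 : m * x ≤ M * d := le_of_mul_le_mul_right (by nlinarith) h0
    rw [div_mul_eq_mul_div, le_div_iff₀ hm]
    nlinarith

/-- Pure arithmetic core of the co-state estimate. -/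
lemma arith_aux (a_min a_max N Lg CI H F G GH x ey dpI dIH : ℝ)
    (ha : 0 < a_min) (hmm : a_min ≤ a_max) (hN : 0 ≤ N) (hLg : 0 ≤ Lg) (hCI : 0 ≤ CI)
    (hH0 : 0 < H) (hH1 : H ≤ 1) (hF : 0 ≤ F) (hG : 0 ≤ G) (hGH : 0 ≤ GH)
    (hx : 0 ≤ x) (hey0 : 0 ≤ ey) (hdpI0 : 0 ≤ dpI) (hdIH0 : 0 ≤ dIH)
    (hey : ey ≤ a_max * CI / a_min * (H * F))
    (hGb : G ≤ GH + Lg * N * ey)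
    (hmain : a_min * x ^ 2 ≤ a_max * x * dpI + Lg * N * ey * (N * dIH))
    (hdpI : dpI ≤ CI * (H * G))
    (hdIH : dIH ≤ dpI + x) :
    x ≤ max 1 ((a_max * CI * (1 + Lg * N * (a_max * CI / a_min))
          + Lg * N ^ 2 * (a_max * CI / a_min)
          + Lg * N ^ 2 * (a_max * CI / a_min) * CI * (1 + Lg * N * (a_max * CI / a_min)))
          / a_min) * H * (F + GH) := by
  have ha_max0 : 0 ≤ a_max := le_trans ha.le hmm
  set cy : ℝ := a_max * CI / a_min with hcy
  have hcy0 : 0 ≤ cy := div_nonneg (mul_nonneg ha_max0 hCI) ha.le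
  set cG : ℝ := 1 + Lg * N * cy with hcG
  have hq0 : 0 ≤ Lg * N * cy := mul_nonneg (mul_nonneg hLg hN) hcy0
  have hcG1 : 1 ≤ cG := by rw [hcG]; linarith
  have hcG0 : 0 ≤ cG := by linarith
  set c₁ : ℝ := a_max * CI * cG + Lg * N ^ 2 * cy with hc₁
  set c₂ : ℝ := Lg * N ^ 2 * cy * CI * cG with hc₂
  have hc₁0 : 0 ≤ c₁ := by
    rw [hc₁]
    have := mul_nonneg (mul_nonneg ha_max0 hCI) hcG0
    have := mul_nonneg (mul_nonneg hLg (sq_nonneg N)) hcy0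
    linarith
  have hc₂0 : 0 ≤ c₂ := by
    rw [hc₂]
    exact mul_nonneg (mul_nonneg (mul_nonneg (mul_nonneg hLg (sq_nonneg N)) hcy0) hCI) hcG0
  set S : ℝ := H * (F + GH) with hS
  have hS0 : 0 ≤ S := mul_nonneg hH0.le (by linarith)
  have hHGH : 0 ≤ H * GH := mul_nonneg hH0.le hGH
  have hHF0 : 0 ≤ H * F := mul_nonneg hH0.le hF
  have hHF : H * F ≤ S := by
    have : H * (F + GH) = H * F + H * GH := by ring
    rw [hS]; linarith
  have hey' : ey ≤ cy * S := by
    calc ey ≤ cy * (H * F) := hey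
      _ ≤ cy * S := mul_le_mul_of_nonneg_left hHF hcy0
  -- bound H * G ≤ cG * S
  have step1 : H * G ≤ H * GH + H * (Lg * N * ey) := by
    calc H * G ≤ H * (GH + Lg * N * ey) := mul_le_mul_of_nonneg_left hGb hH0.le
      _ = H * GH + H * (Lg * N * ey) := by ring
  have step2 : H * (Lg * N * ey) ≤ Lg * N * ey :=
    mul_le_of_le_one_left (mul_nonneg (mul_nonneg hLg hN) hey0) hH1
  have step3 : Lg * N * ey ≤ Lg * N * (cy * S) :=
    mul_le_mul_of_nonneg_left hey' (mul_nonneg hLg hN)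
  have hidG : cG * S = S + Lg * N * (cy * S) := by rw [hcG]; ring
  have hHG : H * G ≤ cG * S := by
    have : H * GH ≤ S := by
      have : H * (F + GH) = H * F + H * GH := by ring
      rw [hS]; linarith
    linarith
  -- bound dpI and dIH
  have hdpI' : dpI ≤ CI * (cG * S) :=
    le_trans hdpI (mul_le_mul_of_nonneg_left hHG hCI)
  have hdIH' : dIH ≤ CI * (cG * S) + x := by linarith
  -- quadratic inequality
  have t1 : a_max * x * dpI ≤ a_max * CI * cG * (S * x) := by
    have h := mul_le_mul_of_nonneg_left hdpI' (mul_nonneg ha_max0 hx)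
    have e1 : a_max * x * (CI * (cG * S)) = a_max * CI * cG * (S * x) := by ring
    have e2 : a_max * x * dpI = a_max * x * dpI := rfl
    calc a_max * x * dpI = a_max * x * dpI := rfl
      _ ≤ a_max * x * (CI * (cG * S)) := h
      _ = a_max * CI * cG * (S * x) := e1
  have t2 : Lg * N * ey * (N * dIH) ≤ Lg * N ^ 2 * cy * S * (CI * cG * S + x) := by
    have u2 : N * dIH ≤ N * (CI * (cG * S) + x) := mul_le_mul_of_nonneg_left hdIH' hN
    have u3 : Lg * N * ey * (N * dIH) ≤ Lg * N * (cy * S) * (N * (CI * (cG * S) + x)) := by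
      apply mul_le_mul step3 u2 (mul_nonneg hN hdIH0)
      exact mul_nonneg (mul_nonneg hLg hN) (mul_nonneg hcy0 hS0)
    calc Lg * N * ey * (N * dIH) ≤ Lg * N * (cy * S) * (N * (CI * (cG * S) + x)) := u3
      _ = Lg * N ^ 2 * cy * S * (CI * cG * S + x) := by ring
  have e : c₁ * (S * x) + c₂ * S ^ 2
      = a_max * CI * cG * (S * x) + Lg * N ^ 2 * cy * S * (CI * cG * S + x) := by
    rw [hc₁, hc₂]; ring
  have hquad : a_min * x ^ 2 ≤ c₁ * (S * x) + c₂ * S ^ 2 := by linarith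
  -- the goal constant is  max 1 ((c₁ + c₂)/a_min)
  have hgoal : max 1 ((a_max * CI * (1 + Lg * N * (a_max * CI / a_min))
          + Lg * N ^ 2 * (a_max * CI / a_min)
          + Lg * N ^ 2 * (a_max * CI / a_min) * CI * (1 + Lg * N * (a_max * CI / a_min)))
          / a_min) = max 1 ((c₁ + c₂) / a_min) := by
    rw [hc₁, hc₂, hcG, hcy]
  rw [hgoal]
  rcases le_or_gt x S with hcase | hcase
  · calc x ≤ 1 * S := by linarith
      _ ≤ max 1 ((c₁ + c₂) / a_min) * S :=
          mul_le_mul_of_nonneg_right (le_max_left _ _) hS0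
      _ = max 1 ((c₁ + c₂) / a_min) * H * (F + GH) := by rw [hS]; ring
  · have hxpos : 0 < x := lt_of_le_of_lt hS0 hcase
    have h1 : a_min * x ^ 2 ≤ (c₁ + c₂) * x * S := by
      have hs2 : S * S ≤ S * x := mul_le_mul_of_nonneg_left hcase.le hS0
      have hs2' : c₂ * S ^ 2 ≤ c₂ * (S * x) := by
        have : S ^ 2 = S * S := sq S
        rw [this]
        exact mul_le_mul_of_nonneg_left hs2 hc₂0
      have hid : (c₁ + c₂) * x * S = c₁ * (S * x) + c₂ * (S * x) := by ring
      linarith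
    have h2 : x ≤ (c₁ + c₂) / a_min * S :=
      quad_div_aux ha hx hS0 (by linarith) h1
    calc x ≤ (c₁ + c₂) / a_min * S := h2
      _ ≤ max 1 ((c₁ + c₂) / a_min) * S :=
          mul_le_mul_of_nonneg_right (le_max_right _ _) hS0
      _ = max 1 ((c₁ + c₂) / a_min) * H * (F + GH) := by rw [hS]; ring

open scoped RealInnerProductSpace

/-- Co-state Galerkin error estimate (second estimate of Lemma 4.2, abstract form).
The constant `C` depends only on `a_min`, `a_max`, `‖ι‖`, `L_g`, `C_I`
(it is quantified before the mesh size `H`, the data `f` and the control `u_H`). -/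
theorem stmt2
    {V Y U : Type*}
    [NormedAddCommGroup V] [InnerProductSpace ℝ V] [CompleteSpace V]
    [NormedAddCommGroup Y] [InnerProductSpace ℝ Y] [CompleteSpace Y]
    [NormedAddCommGroup U] [InnerProductSpace ℝ U] [CompleteSpace U]
    (ι : V →L[ℝ] Y)
    (a_min a_max C_B L_g C_I : ℝ)
    (ha_min : 0 < a_min) (hminmax : a_min ≤ a_max) :
    ∃ C : ℝ,
      ∀ (a : V →ₗ[ℝ] V →ₗ[ℝ] ℝ),
        (∀ v w : V, a v w = a w v) →
        (∀ v w : V, |a v w| ≤ a_max * ‖v‖ * ‖w‖) →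
        (∀ v : V, a_min * ‖v‖ ^ 2 ≤ a v v) →
        ∀ (B : U →L[ℝ] Y), (∀ w : U, ‖B w‖ ≤ C_B * ‖w‖) →
        ∀ (g' : Y → Y), (∀ y₁ y₂ : Y, ‖g' y₁ - g' y₂‖ ≤ L_g * ‖y₁ - y₂‖) →
        ∀ (V_H : Submodule ℝ V), IsClosed (V_H : Set V) →
        ∀ (H : ℝ) (f : Y) (u_H : U) (yuH puH y_H p_H y_I p_I : V),
          0 < H → H ≤ 1 →
          (∀ v : V, a yuH v = ⟪f + B u_H, ι v⟫) →
          (∀ q : V, a puH q = ⟪g' (ι yuH), ι q⟫) →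
          y_H ∈ V_H → p_H ∈ V_H →
          (∀ v ∈ V_H, a y_H v = ⟪f + B u_H, ι v⟫) →
          (∀ q ∈ V_H, a p_H q = ⟪g' (ι y_H), ι q⟫) →
          y_I ∈ V_H → p_I ∈ V_H →
          ‖yuH - y_I‖ ≤ C_I * H * ‖f + B u_H‖ →
          ‖puH - p_I‖ ≤ C_I * H * ‖g' (ι yuH)‖ →
          ‖puH - p_H‖ ≤ C * H * (‖f + B u_H‖ + ‖g' (ι y_H)‖) := by
  have hamax0 : 0 ≤ a_max := le_trans ha_min.le hminmax
  refine ⟨max 1 ((a_max * (max C_I 0) * (1 + (max L_g 0) * ‖ι‖ * (a_max * (max C_I 0) / a_min))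
          + (max L_g 0) * ‖ι‖ ^ 2 * (a_max * (max C_I 0) / a_min)
          + (max L_g 0) * ‖ι‖ ^ 2 * (a_max * (max C_I 0) / a_min) * (max C_I 0)
              * (1 + (max L_g 0) * ‖ι‖ * (a_max * (max C_I 0) / a_min)))
          / a_min), ?_⟩
  intro a hsymm hbdd hcoer B hB g' hg' V_H hVH H f u_H yuH puH y_H p_H y_I p_I
    hH0 hH1 hy hp hyHm hpHm hyH hpH hyIm hpIm hyI hpI
  have hLg' : L_g ≤ max L_g 0 := le_max_left _ _
  have hCI' : C_I ≤ max C_I 0 := le_max_left _ _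
  have hLg0 : (0:ℝ) ≤ max L_g 0 := le_max_right _ _
  have hCI0 : (0:ℝ) ≤ max C_I 0 := le_max_right _ _
  -- Galerkin orthogonality for the state
  have horth : ∀ v ∈ V_H, a (yuH - y_H) v = 0 := by
    intro v hv
    rw [map_sub, LinearMap.sub_apply, hy v, hyH v hv, sub_self]
  -- Céa-type estimate for the state
  have hstate : ‖yuH - y_H‖ ≤ a_max * (max C_I 0) / a_min * (H * ‖f + B u_H‖) := by
    have h1 : a (yuH - y_H) (yuH - y_H) = a (yuH - y_H) (yuH - y_I) := by
      have h0 : a (yuH - y_H) (y_I - y_H) = 0 := horth _ (V_H.sub_mem hyIm hyHm)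
      have h2 : a (yuH - y_H) (yuH - y_H)
          = a (yuH - y_H) (yuH - y_I) + a (yuH - y_H) (y_I - y_H) := by
        rw [← map_add, sub_add_sub_cancel]
      rw [h2, h0, add_zero]
    have h2 : a_min * ‖yuH - y_H‖ ^ 2 ≤ a_max * ‖yuH - y_H‖ * ‖yuH - y_I‖ :=
      calc a_min * ‖yuH - y_H‖ ^ 2 ≤ a (yuH - y_H) (yuH - y_H) := hcoer _
        _ = a (yuH - y_H) (yuH - y_I) := h1
        _ ≤ |a (yuH - y_H) (yuH - y_I)| := le_abs_self _
        _ ≤ a_max * ‖yuH - y_H‖ * ‖yuH - y_I‖ := hbdd _ _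
    have h3 : ‖yuH - y_H‖ ≤ a_max / a_min * ‖yuH - y_I‖ :=
      quad_div_aux ha_min (norm_nonneg _) (norm_nonneg _) hamax0 h2
    have h4 : ‖yuH - y_I‖ ≤ max C_I 0 * (H * ‖f + B u_H‖) := by
      have hHF : 0 ≤ H * ‖f + B u_H‖ := mul_nonneg hH0.le (norm_nonneg _)
      have := mul_le_mul_of_nonneg_right hCI' hHF
      calc ‖yuH - y_I‖ ≤ C_I * H * ‖f + B u_H‖ := hyI
        _ = C_I * (H * ‖f + B u_H‖) := by ring
        _ ≤ max C_I 0 * (H * ‖f + B u_H‖) := this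
    calc ‖yuH - y_H‖ ≤ a_max / a_min * ‖yuH - y_I‖ := h3
      _ ≤ a_max / a_min * (max C_I 0 * (H * ‖f + B u_H‖)) :=
          mul_le_mul_of_nonneg_left h4 (by positivity)
      _ = a_max * (max C_I 0) / a_min * (H * ‖f + B u_H‖) := by ring
  -- Lipschitz bound
  have hDg : ‖g' (ι yuH) - g' (ι y_H)‖ ≤ max L_g 0 * ‖ι‖ * ‖yuH - y_H‖ := by
    calc ‖g' (ι yuH) - g' (ι y_H)‖ ≤ L_g * ‖ι yuH - ι y_H‖ := hg' _ _
      _ = L_g * ‖ι (yuH - y_H)‖ := by rw [map_sub]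
      _ ≤ max L_g 0 * (‖ι‖ * ‖yuH - y_H‖) :=
          mul_le_mul hLg' (ι.le_opNorm _) (norm_nonneg _) hLg0
      _ = max L_g 0 * ‖ι‖ * ‖yuH - y_H‖ := by ring
  have hGb : ‖g' (ι yuH)‖ ≤ ‖g' (ι y_H)‖ + max L_g 0 * ‖ι‖ * ‖yuH - y_H‖ := by
    have : ‖g' (ι yuH)‖ ≤ ‖g' (ι y_H)‖ + ‖g' (ι yuH) - g' (ι y_H)‖ := by
      have h := norm_add_le (g' (ι y_H)) (g' (ι yuH) - g' (ι y_H))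
      have he : g' (ι y_H) + (g' (ι yuH) - g' (ι y_H)) = g' (ι yuH) := by abel
      rw [he] at h
      exact h
    linarith
  -- co-state error equation and main quadratic inequality
  have hperr : ∀ q ∈ V_H, a (puH - p_H) q = ⟪g' (ι yuH) - g' (ι y_H), ι q⟫ := by
    intro q hq
    rw [map_sub, LinearMap.sub_apply, hp q, hpH q hq, ← inner_sub_left]
  have hkey : a (puH - p_H) (puH - p_H)
      = a (puH - p_H) (puH - p_I) + ⟪g' (ι yuH) - g' (ι y_H), ι (p_I - p_H)⟫ := by
    have h2 : a (puH - p_H) (puH - p_H)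
        = a (puH - p_H) (puH - p_I) + a (puH - p_H) (p_I - p_H) := by
      rw [← map_add, sub_add_sub_cancel]
    rw [h2, hperr _ (V_H.sub_mem hpIm hpHm)]
  have hmain : a_min * ‖puH - p_H‖ ^ 2 ≤ a_max * ‖puH - p_H‖ * ‖puH - p_I‖
      + max L_g 0 * ‖ι‖ * ‖yuH - y_H‖ * (‖ι‖ * ‖p_I - p_H‖) := by
    have hb1 : a (puH - p_H) (puH - p_I) ≤ a_max * ‖puH - p_H‖ * ‖puH - p_I‖ :=
      le_trans (le_abs_self _) (hbdd _ _)
    have hb2 : ⟪g' (ι yuH) - g' (ι y_H), ι (p_I - p_H)⟫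
        ≤ max L_g 0 * ‖ι‖ * ‖yuH - y_H‖ * (‖ι‖ * ‖p_I - p_H‖) := by
      calc ⟪g' (ι yuH) - g' (ι y_H), ι (p_I - p_H)⟫
          ≤ ‖g' (ι yuH) - g' (ι y_H)‖ * ‖ι (p_I - p_H)‖ := real_inner_le_norm _ _
        _ ≤ max L_g 0 * ‖ι‖ * ‖yuH - y_H‖ * (‖ι‖ * ‖p_I - p_H‖) := by
            apply mul_le_mul hDg (ι.le_opNorm _) (norm_nonneg _)
            positivity
    calc a_min * ‖puH - p_H‖ ^ 2 ≤ a (puH - p_H) (puH - p_H) := hcoer _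
      _ = a (puH - p_H) (puH - p_I) + ⟪g' (ι yuH) - g' (ι y_H), ι (p_I - p_H)⟫ := hkey
      _ ≤ _ := add_le_add hb1 hb2
  have hdpI : ‖puH - p_I‖ ≤ max C_I 0 * (H * ‖g' (ι yuH)‖) := by
    have hHG : 0 ≤ H * ‖g' (ι yuH)‖ := mul_nonneg hH0.le (norm_nonneg _)
    have := mul_le_mul_of_nonneg_right hCI' hHG
    calc ‖puH - p_I‖ ≤ C_I * H * ‖g' (ι yuH)‖ := hpI
      _ = C_I * (H * ‖g' (ι yuH)‖) := by ring
      _ ≤ max C_I 0 * (H * ‖g' (ι yuH)‖) := this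
  have hdIH : ‖p_I - p_H‖ ≤ ‖puH - p_I‖ + ‖puH - p_H‖ := by
    have h := norm_add_le (p_I - puH) (puH - p_H)
    rw [sub_add_sub_cancel, norm_sub_rev p_I puH] at h
    exact h
  exact arith_aux a_min a_max ‖ι‖ (max L_g 0) (max C_I 0) H
    ‖f + B u_H‖ ‖g' (ι yuH)‖ ‖g' (ι y_H)‖ ‖puH - p_H‖ ‖yuH - y_H‖
    ‖puH - p_I‖ ‖p_I - p_H‖
    ha_min hminmax (norm_nonneg _) hLg0 hCI0 hH0 hH1 (norm_nonneg _) (norm_nonneg _)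
    (norm_nonneg _) (norm_nonneg _) (norm_nonneg _) (norm_nonneg _) (norm_nonneg _)
    hstate hGb hmain hdpI hdIH
end

section
/- Let V, Y, U be real Hilbert spaces, ι : V → Y a bounded linear map, a : V × V → ℝ a symmetric bounded coercive bilinear form, B : U → Y a bounded linear operator with adjoint B*, f ∈ Y. Assume g' : Y → Y is strongly monotone with constant M_g ≥ 0 (⟪g'(y) − g'(ỹ), y − ỹ⟫_Y ≥ M_g‖y − ỹ‖_Y²) and h' : U → U is strongly monotone with constant M_h > 0 (⟪h'(u) − h'(ũ), u − ũ⟫_U ≥ M_h‖u − ũ‖_U²). For u, ũ ∈ U define y(u), y(ũ), p(u), p(ũ) ∈ V by a(y(u),w) = ⟪f + Bu, ιw⟫_Y, a(y(ũ),w) = ⟪f + Bũ, ιw⟫_Y, a(p(u),q) = ⟪g'(ι y(u)), ιq⟫_Y, a(p(ũ),q) = ⟪g'(ι y(ũ)), ιq⟫_Y for all w, q ∈ V. Then M_h‖ũ − u‖_U² ≤ ⟪h'(ũ) + B*(ι p(ũ)), ũ − u⟫_U − ⟪h'(u) + B*(ι p(u)), ũ − u⟫_U; in particular, the map u ↦ h'(u)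 + B*(ι p(u)) is strongly monotone on U with constant M_h. -/
open scoped RealInnerProductSpace

/-- Strong monotonicity of `u ↦ h'(u) + B*(ι p(u))` (key convexity inequality in
the proof of Lemma 4.3, abstract form). -/
theorem stmt4
    {V Y U : Type*}
    [NormedAddCommGroup V] [InnerProductSpace ℝ V] [CompleteSpace V]
    [NormedAddCommGroup Y] [InnerProductSpace ℝ Y] [CompleteSpace Y]
    [NormedAddCommGroup U] [InnerProductSpace ℝ U] [CompleteSpace U]
    (ι : V →L[ℝ] Y)
    (a : V →ₗ[ℝ] V →ₗ[ℝ] ℝ)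
    (a_min a_max : ℝ)
    (ha_min : 0 < a_min) (hminmax : a_min ≤ a_max)
    (hsym : ∀ v w : V, a v w = a w v)
    (hbound : ∀ v w : V, |a v w| ≤ a_max * ‖v‖ * ‖w‖)
    (hcoer : ∀ v : V, a_min * ‖v‖ ^ 2 ≤ a v v)
    (B : U →L[ℝ] Y)
    (f : Y)
    (M_g M_h : ℝ) (hMg : 0 ≤ M_g) (hMh : 0 < M_h)
    (g' : Y → Y)
    (hgmono : ∀ y₁ y₂ : Y, M_g * ‖y₁ - y₂‖ ^ 2 ≤ ⟪g' y₁ - g' y₂, y₁ - y₂⟫)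
    (h' : U → U)
    (hhmono : ∀ u₁ u₂ : U, M_h * ‖u₁ - u₂‖ ^ 2 ≤ ⟪h' u₁ - h' u₂, u₁ - u₂⟫)
    (u ut : U) (yu yut pu put : V)
    (hyu : ∀ w : V, a yu w = ⟪f + B u, ι w⟫)
    (hyut : ∀ w : V, a yut w = ⟪f + B ut, ι w⟫)
    (hpu : ∀ q : V, a pu q = ⟪g' (ι yu), ι q⟫)
    (hput : ∀ q : V, a put q = ⟪g' (ι yut), ι q⟫) :
    M_h * ‖ut - u‖ ^ 2 ≤
      ⟪h' ut + (ContinuousLinearMap.adjoint B) (ι put), ut - u⟫ -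
        ⟪h' u + (ContinuousLinearMap.adjoint B) (ι pu), ut - u⟫ := by
  have key : (0:ℝ) ≤ ⟪ι put - ι pu, B ut - B u⟫ := by
    have h1 : ⟪B ut - B u, ι (put - pu)⟫ = a yut (put - pu) - a yu (put - pu) := by
      rw [hyu, hyut, ← inner_sub_left]
      congr 1
      abel
    have h2 : a yut (put - pu) - a yu (put - pu)
        = ⟪g' (ι yut) - g' (ι yu), ι (yut - yu)⟫ := by
      rw [hsym yut, hsym yu]
      simp only [map_sub, LinearMap.sub_apply, hput, hpu, inner_sub_left, inner_sub_right]
    have h3 : (0:ℝ) ≤ ⟪g' (ι yut) - g' (ι yu), ι yut - ι yu⟫ := by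
      have := hgmono (ι yut) (ι yu)
      nlinarith [sq_nonneg ‖ι yut - ι yu‖, norm_nonneg (ι yut - ι yu)]
    have h4 : ⟪ι put - ι pu, B ut - B u⟫ = ⟪B ut - B u, ι (put - pu)⟫ := by
      rw [real_inner_comm, map_sub]
    rw [h4, h1, h2, map_sub]
    exact h3
  have hadj : ∀ z : Y, ⟪(ContinuousLinearMap.adjoint B) z, ut - u⟫ = ⟪z, B (ut - u)⟫ := by
    intro z
    exact ContinuousLinearMap.adjoint_inner_left B (ut - u) z
  have expand :
      ⟪h' ut + (ContinuousLinearMap.adjoint B) (ι put), ut - u⟫ -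
        ⟪h' u + (ContinuousLinearMap.adjoint B) (ι pu), ut - u⟫
      = ⟪h' ut - h' u, ut - u⟫ + ⟪ι put - ι pu, B ut - B u⟫ := by
    rw [inner_add_left, inner_add_left, hadj, hadj, inner_sub_left,
      inner_sub_left, map_sub]
    ring
  rw [expand]
  have := hhmono ut u
  linarith
end

section
/- Let V, Y, U be real Hilbert spaces, ι : V → Y bounded, a : V × V → ℝ a symmetric bounded coercive bilinear form (coercivity constant a_min > 0), B : U → Y bounded with ‖Bw‖_Y ≤ C_B‖w‖_U and adjoint B*, g' : Y → Y Lipschitz (constant L_g) and strongly monotone with constant M_g ≥ 0, h' : U → U Lipschitz (constant L_h) and strongly monotone with constant M_h > 0, f ∈ Y. Let K ⊆ U be closed convex and K_H ⊆ K closed convex. Suppose (y,p,u) satisfies the continuous optimality system: u ∈ K, a(y,v) = ⟪f + Bu, ιv⟫_Y and a(p,q) = ⟪g'(ιy), ιq⟫_Y for all v, q ∈ V, and ⟪h'(u) + B*(ιp), w − u⟫_U ≥ 0 for all w ∈ K. Let V_H ⊆ V be a closed subspace and suppose (y_H,p_H,u_H) satisfies the discrete optimality system: u_H ∈ K_H,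 a(y_H,v) = ⟪f + Bu_H, ιv⟫_Y and a(p_H,q) = ⟪g'(ι y_H), ιq⟫_Y for all v, q ∈ V_H, and ⟪h'(u_H) + B*(ι p_H), w − u_H⟫_U ≥ 0 for all w ∈ K_H. Let y(u_H), p(u_H) ∈ V be the auxiliary solutions: a(y(u_H),v) = ⟪f + Bu_H, ιv⟫_Y and a(p(u_H),q) = ⟪g'(ι y(u_H)), ιq⟫_Y for all v, q ∈ V. If there exist ũ ∈ K_H and ε₁, ε₂ ≥ 0 with ‖u − ũ‖_U ≤ ε₁ and ⟪h'(u) + B*(ιp), ũ − u⟫_U ≤ ε₂², then there exists a constant C depending only on a_min, ‖ι‖, C_B, L_g, L_h, M_h (not on ε₁, ε₂ or the data) such that ‖u − u_H‖_U² ≤ C(‖p(u_H) − p_H‖_V² + ε₁² + ε₂²). -/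
open scoped RealInnerProductSpace

set_option maxHeartbeats 1000000 in
/-- Control error estimate (intermediate form (eqn:uh1) of Lemma 4.3, abstract form).
The constant `C` depends only on `a_min`, `‖ι‖`, `C_B`, `L_g`, `L_h`, `M_h`
(it is quantified before everything else). -/
theorem stmt5
    {V Y U : Type*}
    [NormedAddCommGroup V] [InnerProductSpace ℝ V] [CompleteSpace V]
    [NormedAddCommGroup Y] [InnerProductSpace ℝ Y] [CompleteSpace Y]
    [NormedAddCommGroup U] [InnerProductSpace ℝ U] [CompleteSpace U]
    (ι : V →L[ℝ] Y)
    (a_min C_B L_g L_h M_h : ℝ)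
    (ha_min : 0 < a_min) (hMh : 0 < M_h) :
    ∃ C : ℝ,
      ∀ (a : V →ₗ[ℝ] V →ₗ[ℝ] ℝ) (a_max : ℝ),
        (∀ v w : V, a v w = a w v) →
        (∀ v w : V, |a v w| ≤ a_max * ‖v‖ * ‖w‖) →
        (∀ v : V, a_min * ‖v‖ ^ 2 ≤ a v v) →
        ∀ (B : U →L[ℝ] Y), (∀ w : U, ‖B w‖ ≤ C_B * ‖w‖) →
        ∀ (g' : Y → Y) (M_g : ℝ), 0 ≤ M_g →
          (∀ y₁ y₂ : Y, ‖g' y₁ - g' y₂‖ ≤ L_g * ‖y₁ - y₂‖) →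
          (∀ y₁ y₂ : Y, M_g * ‖y₁ - y₂‖ ^ 2 ≤ ⟪g' y₁ - g' y₂, y₁ - y₂⟫) →
        ∀ (h' : U → U),
          (∀ u₁ u₂ : U, ‖h' u₁ - h' u₂‖ ≤ L_h * ‖u₁ - u₂‖) →
          (∀ u₁ u₂ : U, M_h * ‖u₁ - u₂‖ ^ 2 ≤ ⟪h' u₁ - h' u₂, u₁ - u₂⟫) →
        ∀ (f : Y) (K K_H : Set U), IsClosed K → Convex ℝ K →
          IsClosed K_H → Convex ℝ K_H → K_H ⊆ K →
        ∀ (V_H : Submodule ℝ V), IsClosed (V_H : Set V) →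
        ∀ (y p : V) (u : U),
          u ∈ K →
          (∀ v : V, a y v = ⟪f + B u, ι v⟫) →
          (∀ q : V, a p q = ⟪g' (ι y), ι q⟫) →
          (∀ w ∈ K, 0 ≤ ⟪h' u + (ContinuousLinearMap.adjoint B) (ι p), w - u⟫) →
        ∀ (y_H p_H : V) (u_H : U),
          u_H ∈ K_H → y_H ∈ V_H → p_H ∈ V_H →
          (∀ v ∈ V_H, a y_H v = ⟪f + B u_H, ι v⟫) →
          (∀ q ∈ V_H, a p_H q = ⟪g' (ι y_H), ι q⟫) →
          (∀ w ∈ K_H, 0 ≤ ⟪h' u_H + (ContinuousLinearMap.adjoint B) (ι p_H), w - u_H⟫) →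
        ∀ (yuH puH : V),
          (∀ v : V, a yuH v = ⟪f + B u_H, ι v⟫) →
          (∀ q : V, a puH q = ⟪g' (ι yuH), ι q⟫) →
        ∀ (ut : U) (ε₁ ε₂ : ℝ), 0 ≤ ε₁ → 0 ≤ ε₂ →
          ut ∈ K_H →
          ‖u - ut‖ ≤ ε₁ →
          ⟪h' u + (ContinuousLinearMap.adjoint B) (ι p), ut - u⟫ ≤ ε₂ ^ 2 →
          ‖u - u_H‖ ^ 2 ≤ C * (‖puH - p_H‖ ^ 2 + ε₁ ^ 2 + ε₂ ^ 2) := by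

  set Dn : ℝ := |C_B| * ‖ι‖ with hDn_def
  set c₁ : ℝ := |L_g| * |C_B| * ‖ι‖ ^ 3 / a_min ^ 2 with hc1_def
  set A : ℝ := Dn + |L_h| + Dn * c₁ with hA_def
  refine ⟨(2 * A ^ 2 + M_h * Dn + 2 * M_h) / M_h ^ 2, ?_⟩
  intro a a_max hsymm hbdd hcoer B hB g' M_g hMg hgLip hgMono h' hhLip hhMono
    f K K_H hKc hKconv hKHc hKHconv hKHsub V_H hVHc y p u huK hy hp hVI
    y_H p_H u_H huH hyHm hpHm hyHeq hpHeq hVIH yuH puH hyuH hpuH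
    ut ε₁ ε₂ hε₁ hε₂ hutK hutε₁ hutε₂
  have hDn : (0:ℝ) ≤ Dn := by positivity
  have hc₁ : (0:ℝ) ≤ c₁ := by positivity
  have hA : (0:ℝ) ≤ A := by positivity
  clear_value Dn c₁ A
  have hB' : ∀ w : U, ‖B w‖ ≤ |C_B| * ‖w‖ := fun w =>
    (hB w).trans (mul_le_mul_of_nonneg_right (le_abs_self C_B) (norm_nonneg w))
  set t := ‖u - u_H‖ with ht_def
  set q := ‖puH - p_H‖ with hq_def
  have ht : (0:ℝ) ≤ t := norm_nonneg _
  have hq : (0:ℝ) ≤ q := norm_nonneg _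
  -- difference equations for the auxiliary solutions
  have hdy : ∀ v : V, a (y - yuH) v = ⟪B (u - u_H), ι v⟫ := by
    intro v
    rw [map_sub, LinearMap.sub_apply, hy v, hyuH v, map_sub, inner_sub_left,
      inner_add_left, inner_add_left]
    ring
  have hdp : ∀ v : V, a (p - puH) v = ⟪g' (ι y) - g' (ι yuH), ι v⟫ := by
    intro v
    rw [map_sub, LinearMap.sub_apply, hp v, hpuH v, inner_sub_left]
  -- elliptic a priori bounds
  have hdyb : a_min * ‖y - yuH‖ ≤ |C_B| * ‖ι‖ * t := by
    rcases eq_or_lt_of_le (norm_nonneg (y - yuH)) with h0 | h0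
    · rw [← h0, mul_zero]; positivity
    · have h1 : a_min * ‖y - yuH‖ ^ 2 ≤ a (y - yuH) (y - yuH) := hcoer _
      rw [hdy] at h1
      have h2 : ⟪B (u - u_H), ι (y - yuH)⟫ ≤ ‖B (u - u_H)‖ * ‖ι (y - yuH)‖ :=
        real_inner_le_norm _ _
      have h3 : ‖B (u - u_H)‖ ≤ |C_B| * t := hB' _
      have h4 : ‖ι (y - yuH)‖ ≤ ‖ι‖ * ‖y - yuH‖ := ι.le_opNorm _
      have h5 : a_min * ‖y - yuH‖ ^ 2 ≤ (|C_B| * t) * (‖ι‖ * ‖y - yuH‖) :=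
        (h1.trans h2).trans (mul_le_mul h3 h4 (norm_nonneg _) (by positivity))
      nlinarith [h0, h5]
  have hdpb : a_min * ‖p - puH‖ ≤ |L_g| * ‖ι‖ ^ 2 * ‖y - yuH‖ := by
    rcases eq_or_lt_of_le (norm_nonneg (p - puH)) with h0 | h0
    · rw [← h0, mul_zero]; positivity
    · have h1 : a_min * ‖p - puH‖ ^ 2 ≤ a (p - puH) (p - puH) := hcoer _
      rw [hdp] at h1
      have h2 : ⟪g' (ι y) - g' (ι yuH), ι (p - puH)⟫ ≤
          ‖g' (ι y) - g' (ι yuH)‖ * ‖ι (p - puH)‖ := real_inner_le_norm _ _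
      have h3 : ‖g' (ι y) - g' (ι yuH)‖ ≤ |L_g| * (‖ι‖ * ‖y - yuH‖) := by
        refine (hgLip _ _).trans ?_
        have h3a : ‖ι y - ι yuH‖ ≤ ‖ι‖ * ‖y - yuH‖ := by
          rw [← map_sub]; exact ι.le_opNorm _
        calc L_g * ‖ι y - ι yuH‖ ≤ |L_g| * ‖ι y - ι yuH‖ :=
              mul_le_mul_of_nonneg_right (le_abs_self _) (norm_nonneg _)
          _ ≤ |L_g| * (‖ι‖ * ‖y - yuH‖) :=
              mul_le_mul_of_nonneg_left h3a (abs_nonneg _)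
      have h4 : ‖ι (p - puH)‖ ≤ ‖ι‖ * ‖p - puH‖ := ι.le_opNorm _
      have h5 : a_min * ‖p - puH‖ ^ 2 ≤
          (|L_g| * (‖ι‖ * ‖y - yuH‖)) * (‖ι‖ * ‖p - puH‖) :=
        (h1.trans h2).trans (mul_le_mul h3 h4 (norm_nonneg _) (by positivity))
      nlinarith [h0, h5]
  have hdpc : ‖p - puH‖ ≤ c₁ * t := by
    rw [hc1_def, div_mul_eq_mul_div, le_div_iff₀ (by positivity)]
    have m1 := mul_le_mul_of_nonneg_left hdpb ha_min.le
    have m2 := mul_le_mul_of_nonneg_left hdyb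
      (mul_nonneg (abs_nonneg L_g) (mul_nonneg (norm_nonneg ι) (norm_nonneg ι)))
    nlinarith [m1, m2]
  -- variational inequalities
  have mono : M_h * t ^ 2 ≤ ⟪h' u - h' u_H, u - u_H⟫ := hhMono u u_H
  have vi1 : 0 ≤ ⟪h' u + (ContinuousLinearMap.adjoint B) (ι p), u_H - u⟫ :=
    hVI u_H (hKHsub huH)
  have vi2 : 0 ≤ ⟪h' u_H + (ContinuousLinearMap.adjoint B) (ι p_H), ut - u_H⟫ :=
    hVIH ut hutK
  -- algebraic splitting
  have ident : ⟪h' u - h' u_H, u - u_H⟫ =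
      -⟪h' u + (ContinuousLinearMap.adjoint B) (ι p), u_H - u⟫
      - ⟪h' u_H + (ContinuousLinearMap.adjoint B) (ι p_H), ut - u_H⟫
      + ⟪h' u_H + (ContinuousLinearMap.adjoint B) (ι p_H), ut - u⟫
      + ⟪(ContinuousLinearMap.adjoint B) (ι p_H)
          - (ContinuousLinearMap.adjoint B) (ι p), u - u_H⟫ := by
    simp only [inner_sub_left, inner_add_left, inner_sub_right]
    ring
  -- adjoint term
  have adj : ⟪(ContinuousLinearMap.adjoint B) (ι p_H)
      - (ContinuousLinearMap.adjoint B) (ι p), u - u_H⟫ =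
      ⟪ι (p_H - puH), B (u - u_H)⟫ + ⟪ι (puH - p), B (u - u_H)⟫ := by
    simp only [map_sub, inner_sub_left, inner_sub_right,
      ContinuousLinearMap.adjoint_inner_left]
    ring
  have adj2 : ⟪ι (puH - p), B (u - u_H)⟫ ≤ 0 := by
    have e1 : a (y - yuH) (p - puH) = ⟪B (u - u_H), ι (p - puH)⟫ := hdy _
    have e3 : 0 ≤ ⟪g' (ι y) - g' (ι yuH), ι (y - yuH)⟫ := by
      have hm := hgMono (ι y) (ι yuH)
      rw [map_sub]
      exact le_trans (by positivity) hm
    have e4 : ⟪ι (puH - p), B (u - u_H)⟫ = - ⟪B (u - u_H), ι (p - puH)⟫ := by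
      rw [real_inner_comm, show puH - p = -(p - puH) by abel, map_neg,
        inner_neg_right]
    rw [e4, ← e1, hsymm, hdp]
    linarith [e3]
  have adj1 : ⟪ι (p_H - puH), B (u - u_H)⟫ ≤ Dn * q * t := by
    have h2 : ⟪ι (p_H - puH), B (u - u_H)⟫ ≤ ‖ι (p_H - puH)‖ * ‖B (u - u_H)‖ :=
      real_inner_le_norm _ _
    have h3 : ‖ι (p_H - puH)‖ ≤ ‖ι‖ * q := by
      refine (ι.le_opNorm _).trans ?_
      rw [hq_def, norm_sub_rev]
    have h4 : ‖B (u - u_H)‖ ≤ |C_B| * t := hB' _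
    calc ⟪ι (p_H - puH), B (u - u_H)⟫ ≤ (‖ι‖ * q) * (|C_B| * t) :=
          h2.trans (mul_le_mul h3 h4 (norm_nonneg _) (by positivity))
      _ = Dn * q * t := by rw [hDn_def]; ring
  -- third term splitting
  have ident2 : ⟪h' u_H + (ContinuousLinearMap.adjoint B) (ι p_H), ut - u⟫ =
      ⟪h' u_H - h' u, ut - u⟫ + ⟪ι (p_H - p), B (ut - u)⟫
      + ⟪h' u + (ContinuousLinearMap.adjoint B) (ι p), ut - u⟫ := by
    rw [← ContinuousLinearMap.adjoint_inner_left, map_sub]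
    simp only [inner_add_left, inner_sub_left, map_sub]
    ring
  have b1 : ⟪h' u_H - h' u, ut - u⟫ ≤ |L_h| * t * ε₁ := by
    have h2 : ⟪h' u_H - h' u, ut - u⟫ ≤ ‖h' u_H - h' u‖ * ‖ut - u‖ :=
      real_inner_le_norm _ _
    have h3 : ‖h' u_H - h' u‖ ≤ |L_h| * t := by
      refine (hhLip _ _).trans ?_
      rw [norm_sub_rev]
      exact mul_le_mul_of_nonneg_right (le_abs_self _) (norm_nonneg _)
    have h4 : ‖ut - u‖ ≤ ε₁ := by rw [norm_sub_rev]; exact hutε₁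
    exact h2.trans (mul_le_mul h3 h4 (norm_nonneg _) (by positivity))
  have b2 : ⟪ι (p_H - p), B (ut - u)⟫ ≤ Dn * ε₁ * (q + c₁ * t) := by
    have hn1 : ‖p_H - p‖ ≤ q + c₁ * t := by
      have htri : ‖p_H - p‖ ≤ ‖p_H - puH‖ + ‖puH - p‖ :=
        norm_sub_le_norm_sub_add_norm_sub _ _ _
      have hq' : ‖p_H - puH‖ = q := by rw [hq_def, norm_sub_rev]
      have hp' : ‖puH - p‖ ≤ c₁ * t := by rw [norm_sub_rev]; exact hdpc
      linarith
    have h2 : ⟪ι (p_H - p), B (ut - u)⟫ ≤ ‖ι (p_H - p)‖ * ‖B (ut - u)‖ :=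
      real_inner_le_norm _ _
    have h3 : ‖ι (p_H - p)‖ ≤ ‖ι‖ * (q + c₁ * t) :=
      (ι.le_opNorm _).trans (mul_le_mul_of_nonneg_left hn1 (norm_nonneg _))
    have h4 : ‖B (ut - u)‖ ≤ |C_B| * ε₁ := by
      refine (hB' _).trans ?_
      rw [norm_sub_rev]
      exact mul_le_mul_of_nonneg_left hutε₁ (abs_nonneg _)
    calc ⟪ι (p_H - p), B (ut - u)⟫ ≤ (‖ι‖ * (q + c₁ * t)) * (|C_B| * ε₁) :=
          h2.trans (mul_le_mul h3 h4 (norm_nonneg _) (by positivity))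
      _ = Dn * ε₁ * (q + c₁ * t) := by rw [hDn_def]; ring
  -- the key estimate
  have key : M_h * t ^ 2 ≤ Dn * q * t + |L_h| * t * ε₁
      + Dn * ε₁ * (q + c₁ * t) + ε₂ ^ 2 := by
    rw [ident] at mono
    rw [adj] at mono
    rw [ident2] at mono
    linarith [vi1, vi2, adj1, adj2, b1, b2, hutε₂, mono]
  -- conclude by Young's inequality
  have bigger : Dn * q * t + |L_h| * t * ε₁ + Dn * ε₁ * (q + c₁ * t) ≤
      A * (q + ε₁) * t + Dn * ε₁ * q := by
    have n1 : 0 ≤ Dn * (ε₁ * t) := mul_nonneg hDn (mul_nonneg hε₁ ht)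
    have n2 : 0 ≤ |L_h| * (q * t) := mul_nonneg (abs_nonneg L_h) (mul_nonneg hq ht)
    have n3 : 0 ≤ Dn * c₁ * (q * t) := mul_nonneg (mul_nonneg hDn hc₁) (mul_nonneg hq ht)
    rw [hA_def]
    linarith [n1, n2, n3]
  have key' : M_h * t ^ 2 ≤ A * (q + ε₁) * t + Dn * ε₁ * q + ε₂ ^ 2 := by
    linarith [key, bigger]
  have k2 : 2 * M_h * (M_h * t ^ 2) ≤
      2 * M_h * (A * (q + ε₁) * t + Dn * ε₁ * q + ε₂ ^ 2) :=
    mul_le_mul_of_nonneg_left key' (by positivity)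
  have young : 2 * M_h * (A * (q + ε₁) * t) ≤ M_h ^ 2 * t ^ 2 + (A * (q + ε₁)) ^ 2 := by
    nlinarith [sq_nonneg (M_h * t - A * (q + ε₁))]
  have sq1 : (A * (q + ε₁)) ^ 2 ≤ 2 * A ^ 2 * (q ^ 2 + ε₁ ^ 2) := by
    nlinarith [mul_nonneg (sq_nonneg A) (sq_nonneg (q - ε₁))]
  have sq2 : 2 * M_h * (Dn * ε₁ * q) ≤ M_h * Dn * (q ^ 2 + ε₁ ^ 2) := by
    nlinarith [mul_nonneg (mul_nonneg hMh.le hDn) (sq_nonneg (q - ε₁))]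
  rw [div_mul_eq_mul_div, le_div_iff₀ (by positivity)]
  linarith [k2, young, sq1, sq2,
    mul_nonneg (sq_nonneg A) (sq_nonneg ε₂),
    mul_nonneg (mul_nonneg hMh.le hDn) (sq_nonneg ε₂),
    mul_nonneg hMh.le (sq_nonneg q), mul_nonneg hMh.le (sq_nonneg ε₁)]
end

section
/- Let V, Y, U be real Hilbert spaces, ι : V → Y bounded, a : V × V → ℝ a symmetric bounded coercive bilinear form (constants 0 < a_min ≤ a_max), B : U → Y bounded with ‖Bw‖_Y ≤ C_B‖w‖_U and adjoint B*, g' : Y → Y Lipschitz (constant L_g) and strongly monotone with constant M_g ≥ 0, h' : U → U Lipschitz (constant L_h) and strongly monotone with constant M_h > 0, f ∈ Y, K ⊆ U closed convex, K_H ⊆ K closed convex, V_H ⊆ V a closed subspace. Let (y,p,u) satisfy the continuous optimality system (u ∈ K; a(y,v) = ⟪f + Bu, ιv⟫_Y and a(p,q) = ⟪g'(ιy), ιq⟫_Y for all v, q ∈ V; ⟪h'(u) + B*(ιp), w − u⟫_U ≥ 0 for all w ∈ K), and let (y_H,p_H,u_H) satisfy the discrete optimality system on V_H and K_H. Assume: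 (i) there exist ũ ∈ K_H and ε₁ ≥ 0 with ‖u − ũ‖_U ≤ ε₁ and ⟪h'(u) + B*(ιp), ũ − u⟫_U ≤ ε₁²; (ii) V_H has the approximation property with constants C_I and H > 0: for every ρ ∈ Y, the solution z ∈ V of a(z,v) = ⟪ρ, ιv⟫_Y (for all v ∈ V) admits z_I ∈ V_H with ‖z − z_I‖_V ≤ C_I H ‖ρ‖_Y. Then there exist H₀ > 0 and a constant C, both depending only on a_min, a_max, ‖ι‖, C_B, L_g, L_h, M_h, C_I, such that whenever 0 < H ≤ H₀, ‖y − y_H‖_V + ‖p − p_H‖_V + ‖u − u_H‖_U ≤ C(ε₁ + H(‖f + Bu‖_Y + ‖g'(ιy)‖_Y)). -/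
open scoped RealInnerProductSpace

lemma coerc_div (am X t : ℝ) (ham : 0 < am) (hX : 0 ≤ X) (ht : 0 ≤ t)
    (h : am * t ^ 2 ≤ X * t) : t ≤ X / am := by
  rcases eq_or_lt_of_le ht with h0 | h0
  · rw [← h0]; positivity
  · rw [le_div_iff₀ ham]; nlinarith

lemma quad_bound (M E b c D : ℝ) (hM : 0 < M) (hE : 0 ≤ E) (hb : 0 ≤ b) (hc : 0 ≤ c)
    (hD : 0 ≤ D) (h : M * E ^ 2 ≤ b * D * E + c * D ^ 2) :
    E ≤ ((b ^ 2 + 2 * c * M) / M ^ 2 + 1) * D := by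
  have key : M ^ 2 * E ^ 2 ≤ (b ^ 2 + 2 * c * M) * D ^ 2 := by
    nlinarith [sq_nonneg (M * E - b * D)]
  have hq : 0 ≤ b ^ 2 + 2 * c * M := by positivity
  have h1 : 0 ≤ (b ^ 2 + 2 * c * M + 1 * M ^ 2) * D := by positivity
  rw [div_add' _ _ _ (by positivity), div_mul_eq_mul_div, le_div_iff₀ (by positivity)]
  nlinarith [key, mul_le_mul_of_nonneg_left key (sq_nonneg M), h1, sq_nonneg D,
    mul_pos (mul_pos hM hM) (mul_pos hM hM), mul_nonneg hq (sq_nonneg D),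
    mul_nonneg hD hE]

lemma discrete_exists {V : Type*} [NormedAddCommGroup V] [InnerProductSpace ℝ V]
    [CompleteSpace V]
    (a : V →ₗ[ℝ] V →ₗ[ℝ] ℝ) (a_min a_max : ℝ) (ha : 0 < a_min)
    (hb : ∀ v w, |a v w| ≤ a_max * ‖v‖ * ‖w‖) (hc : ∀ v, a_min * ‖v‖ ^ 2 ≤ a v v)
    (V_H : Submodule ℝ V) (hVH : IsClosed (V_H : Set V)) (φ : V →L[ℝ] ℝ) :
    ∃ z ∈ V_H, ∀ v ∈ V_H, a z v = φ v := by
  haveI : CompleteSpace V_H := hVH.completeSpace_coe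
  let Abil : V_H →ₗ[ℝ] V_H →ₗ[ℝ] ℝ :=
    LinearMap.mk₂ ℝ (fun x y => a x y)
      (fun x x' y => by simp) (fun r x y => by simp)
      (fun x y y' => by simp) (fun r x y => by simp)
  have hAb : ∀ x y : V_H, ‖Abil x y‖ ≤ a_max * ‖x‖ * ‖y‖ := fun x y => hb x y
  let A : V_H →L[ℝ] V_H →L[ℝ] ℝ := Abil.mkContinuous₂ a_max hAb
  have hAapp : ∀ x y : V_H, A x y = a x y := fun x y => rfl
  have coercive : IsCoercive A := by
    refine ⟨a_min, ha, fun u => ?_⟩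
    have := hc (u : V)
    calc a_min * ‖u‖ * ‖u‖ = a_min * ‖(u : V)‖ ^ 2 := by rw [Submodule.coe_norm]; ring
    _ ≤ a (u : V) (u : V) := this
    _ = A u u := (hAapp u u).symm
  let w₀ : V_H := (InnerProductSpace.toDual ℝ V_H).symm (φ.comp V_H.subtypeL)
  let z : V_H := coercive.continuousLinearEquivOfBilin.symm w₀
  refine ⟨z, z.2, fun v hv => ?_⟩
  have h1 : A z ⟨v, hv⟩ = ⟪coercive.continuousLinearEquivOfBilin z, (⟨v, hv⟩ : V_H)⟫ :=
    (coercive.continuousLinearEquivOfBilin_apply z ⟨v, hv⟩).symm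
  have h2 : coercive.continuousLinearEquivOfBilin z = w₀ := by simp [z]
  rw [h2] at h1
  have h3 : ⟪w₀, (⟨v, hv⟩ : V_H)⟫ = φ v := by
    simp [w₀, InnerProductSpace.toDual_symm_apply]
  have := h1.trans h3
  simpa [hAapp] using this

set_option maxHeartbeats 2000000

/-- Main a priori error estimate (Theorem 4.4, abstract form).
The threshold `H₀` and the constant `C` depend only on
`a_min`, `a_max`, `‖ι‖`, `C_B`, `L_g`, `L_h`, `M_h`, `C_I`
(they are quantified before everything else). -/
theorem stmt6
    {V Y U : Type*}
    [NormedAddCommGroup V] [InnerProductSpace ℝ V] [CompleteSpace V]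
    [NormedAddCommGroup Y] [InnerProductSpace ℝ Y] [CompleteSpace Y]
    [NormedAddCommGroup U] [InnerProductSpace ℝ U] [CompleteSpace U]
    (ι : V →L[ℝ] Y)
    (a_min a_max C_B L_g L_h M_h C_I : ℝ)
    (ha_min : 0 < a_min) (hminmax : a_min ≤ a_max) (hMh : 0 < M_h) :
    ∃ H₀ : ℝ, 0 < H₀ ∧ ∃ C : ℝ,
      ∀ (a : V →ₗ[ℝ] V →ₗ[ℝ] ℝ),
        (∀ v w : V, a v w = a w v) →
        (∀ v w : V, |a v w| ≤ a_max * ‖v‖ * ‖w‖) →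
        (∀ v : V, a_min * ‖v‖ ^ 2 ≤ a v v) →
        ∀ (B : U →L[ℝ] Y), (∀ w : U, ‖B w‖ ≤ C_B * ‖w‖) →
        ∀ (g' : Y → Y) (M_g : ℝ), 0 ≤ M_g →
          (∀ y₁ y₂ : Y, ‖g' y₁ - g' y₂‖ ≤ L_g * ‖y₁ - y₂‖) →
          (∀ y₁ y₂ : Y, M_g * ‖y₁ - y₂‖ ^ 2 ≤ ⟪g' y₁ - g' y₂, y₁ - y₂⟫) →
        ∀ (h' : U → U),
          (∀ u₁ u₂ : U, ‖h' u₁ - h' u₂‖ ≤ L_h * ‖u₁ - u₂‖) →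
          (∀ u₁ u₂ : U, M_h * ‖u₁ - u₂‖ ^ 2 ≤ ⟪h' u₁ - h' u₂, u₁ - u₂⟫) →
        ∀ (f : Y) (K K_H : Set U), IsClosed K → Convex ℝ K →
          IsClosed K_H → Convex ℝ K_H → K_H ⊆ K →
        ∀ (V_H : Submodule ℝ V), IsClosed (V_H : Set V) →
        -- continuous optimality system
        ∀ (y p : V) (u : U),
          u ∈ K →
          (∀ v : V, a y v = ⟪f + B u, ι v⟫) →
          (∀ q : V, a p q = ⟪g' (ι y), ι q⟫) →
          (∀ w ∈ K, 0 ≤ ⟪h' u + (ContinuousLinearMap.adjoint B) (ι p), w - u⟫) →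
        -- discrete optimality system
        ∀ (y_H p_H : V) (u_H : U),
          u_H ∈ K_H → y_H ∈ V_H → p_H ∈ V_H →
          (∀ v ∈ V_H, a y_H v = ⟪f + B u_H, ι v⟫) →
          (∀ q ∈ V_H, a p_H q = ⟪g' (ι y_H), ι q⟫) →
          (∀ w ∈ K_H, 0 ≤ ⟪h' u_H + (ContinuousLinearMap.adjoint B) (ι p_H), w - u_H⟫) →
        -- hypothesis (i): approximation of u in K_H
        ∀ (ut : U) (ε₁ : ℝ), 0 ≤ ε₁ →
          ut ∈ K_H →
          ‖u - ut‖ ≤ ε₁ →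
          ⟪h' u + (ContinuousLinearMap.adjoint B) (ι p), ut - u⟫ ≤ ε₁ ^ 2 →
        -- hypothesis (ii): approximation property of V_H with mesh size H
        ∀ (H : ℝ), 0 < H → H ≤ H₀ →
          (∀ (ρ : Y) (z : V), (∀ v : V, a z v = ⟪ρ, ι v⟫) →
            ∃ z_I ∈ V_H, ‖z - z_I‖ ≤ C_I * H * ‖ρ‖) →
          ‖y - y_H‖ + ‖p - p_H‖ + ‖u - u_H‖ ≤
            C * (ε₁ + H * (‖f + B u‖ + ‖g' (ι y)‖)) := by
  have ha_max : 0 < a_max := lt_of_lt_of_le ha_min hminmax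
  set n := ‖ι‖ with hn'
  have hn : 0 ≤ n := norm_nonneg _
  set cB := max C_B 0 with hcB'
  set lg := max L_g 0 with hlg'
  set lh := max L_h 0 with hlh'
  set cI := max C_I 0 with hcI'
  have hcB : 0 ≤ cB := le_max_right _ _
  have hlg : 0 ≤ lg := le_max_right _ _
  have hlh : 0 ≤ lh := le_max_right _ _
  have hcI : 0 ≤ cI := le_max_right _ _
  set κ := (1 + a_max / a_min) * cI with hκ'
  have hκ : 0 ≤ κ := by
    apply mul_nonneg _ hcI; positivity
  set κ' := cI + (a_max * cI + lg * n ^ 2 * κ) / a_min with hκ''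
  have hκ'nn : 0 ≤ κ' := by
    apply add_nonneg hcI; apply div_nonneg _ ha_min.le; positivity
  set μ := n * cB / a_min with hμ'
  have hμ : 0 ≤ μ := by positivity
  set ν := lg * n ^ 2 * μ / a_min with hν'
  have hν : 0 ≤ ν := by positivity
  set β := cB * n * κ' + lh + cB * n * ν with hβ'
  have hβ : 0 ≤ β := by positivity
  set k := (β ^ 2 + 2 * (1 + β) * M_h) / M_h ^ 2 + 1 with hk'
  have hk : 0 ≤ k := by positivity
  refine ⟨1, one_pos, κ + κ' + (μ + ν + 1) * k, ?_⟩
  intro a hsym hbdd hcoer B hB g' M_g hMg hgL hgM h' hhL hhM f K K_H hKc hKv hKHc hKHv hKHK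
    V_H hVHc y p u huK hy hp hVI y_H p_H u_H huH hyHm hpHm hdy hdp hdVI ut ε₁ hε₁ hutK hut1
    hut2 H hH hH1 happrox
  have hHnn : 0 ≤ H := hH.le
  set S := ‖f + B u‖ + ‖g' (ι y)‖ with hS'
  have hSnn : 0 ≤ S := by positivity
  set D := ε₁ + H * S with hD'
  have hHS : 0 ≤ H * S := mul_nonneg hHnn hSnn
  have hDnn : 0 ≤ D := add_nonneg hε₁ hHS
  have hε₁D : ε₁ ≤ D := le_add_of_nonneg_right hHS
  have hHSD : H * S ≤ D := le_add_of_nonneg_left hε₁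
  set E := ‖u - u_H‖ with hE'
  have hEnn : 0 ≤ E := norm_nonneg _
  -- interpolants
  obtain ⟨y_I, hyIm, hyIbound⟩ := happrox (f + B u) y hy
  have hyI : ‖y - y_I‖ ≤ cI * (H * S) := by
    calc ‖y - y_I‖ ≤ C_I * H * ‖f + B u‖ := hyIbound
      _ ≤ cI * H * ‖f + B u‖ := by
          apply mul_le_mul_of_nonneg_right _ (norm_nonneg _)
          exact mul_le_mul_of_nonneg_right (le_max_left _ _) hHnn
      _ ≤ cI * (H * S) := by
          rw [mul_assoc]
          apply mul_le_mul_of_nonneg_left _ hcI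
          apply mul_le_mul_of_nonneg_left _ hHnn
          exact le_add_of_nonneg_right (norm_nonneg _)
  obtain ⟨p_I, hpIm, hpIbound⟩ := happrox (g' (ι y)) p hp
  have hpI : ‖p - p_I‖ ≤ cI * (H * S) := by
    calc ‖p - p_I‖ ≤ C_I * H * ‖g' (ι y)‖ := hpIbound
      _ ≤ cI * H * ‖g' (ι y)‖ := by
          apply mul_le_mul_of_nonneg_right _ (norm_nonneg _)
          exact mul_le_mul_of_nonneg_right (le_max_left _ _) hHnn
      _ ≤ cI * (H * S) := by
          rw [mul_assoc]
          apply mul_le_mul_of_nonneg_left _ hcI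
          apply mul_le_mul_of_nonneg_left _ hHnn
          exact le_add_of_nonneg_left (norm_nonneg _)
  -- discrete auxiliary state
  obtain ⟨yh, hyhm, hyh0⟩ := discrete_exists a a_min a_max ha_min hbdd hcoer V_H hVHc
    ((innerSL ℝ (f + B u)).comp ι)
  have l0 : ∀ (x z w : V), a (x - z) w = a x w - a z w := fun x z w => by
    rw [map_sub, LinearMap.sub_apply]
  have hyheq : ∀ v ∈ V_H, a yh v = ⟪f + B u, ι v⟫ := fun v hv => by
    simpa only [ContinuousLinearMap.comp_apply, innerSL_apply_apply] using hyh0 v hv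
  -- Céa for state
  have hyyh : ‖y - yh‖ ≤ κ * (H * S) := by
    have hmem : yh - y_I ∈ V_H := V_H.sub_mem hyhm hyIm
    have h2 : a (yh - y_I) (yh - y_I) = a (y - y_I) (yh - y_I) := by
      rw [l0, l0, hyheq _ hmem, hy]
    have h3 : a (y - y_I) (yh - y_I) ≤ a_max * ‖y - y_I‖ * ‖yh - y_I‖ :=
      (le_abs_self _).trans (hbdd _ _)
    have h4 : ‖yh - y_I‖ ≤ a_max * ‖y - y_I‖ / a_min := by
      apply coerc_div a_min _ _ ha_min (by positivity) (norm_nonneg _)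
      calc a_min * ‖yh - y_I‖ ^ 2 ≤ a (yh - y_I) (yh - y_I) := hcoer _
        _ = a (y - y_I) (yh - y_I) := h2
        _ ≤ a_max * ‖y - y_I‖ * ‖yh - y_I‖ := h3
    calc ‖y - yh‖ = ‖(y - y_I) - (yh - y_I)‖ := by rw [sub_sub_sub_cancel_right]
      _ ≤ ‖y - y_I‖ + ‖yh - y_I‖ := norm_sub_le _ _
      _ ≤ ‖y - y_I‖ + a_max * ‖y - y_I‖ / a_min := by linarith
      _ = (1 + a_max / a_min) * ‖y - y_I‖ := by field_simp
      _ ≤ (1 + a_max / a_min) * (cI * (H * S)) := by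
          apply mul_le_mul_of_nonneg_left hyI; positivity
      _ = κ * (H * S) := by rw [hκ']; ring
  -- discrete auxiliary adjoint
  obtain ⟨ph, hphm, hph0⟩ := discrete_exists a a_min a_max ha_min hbdd hcoer V_H hVHc
    ((innerSL ℝ (g' (ι yh))).comp ι)
  have hpheq : ∀ q ∈ V_H, a ph q = ⟪g' (ι yh), ι q⟫ := fun v hv => by
    simpa only [ContinuousLinearMap.comp_apply, innerSL_apply_apply] using hph0 v hv
  -- Céa for adjoint
  have hgd : ‖g' (ι yh) - g' (ι y)‖ ≤ lg * (n * (κ * (H * S))) := by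
    calc ‖g' (ι yh) - g' (ι y)‖ ≤ L_g * ‖ι yh - ι y‖ := hgL _ _
      _ ≤ lg * ‖ι yh - ι y‖ :=
          mul_le_mul_of_nonneg_right (le_max_left _ _) (norm_nonneg _)
      _ ≤ lg * (n * (κ * (H * S))) := by
          apply mul_le_mul_of_nonneg_left _ hlg
          calc ‖ι yh - ι y‖ = ‖ι (yh - y)‖ := by rw [map_sub]
            _ ≤ n * ‖yh - y‖ := ι.le_opNorm _
            _ = n * ‖y - yh‖ := by rw [norm_sub_rev]
            _ ≤ n * (κ * (H * S)) := mul_le_mul_of_nonneg_left hyyh hn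
  have hpph : ‖p - ph‖ ≤ κ' * (H * S) := by
    have hmem : ph - p_I ∈ V_H := V_H.sub_mem hphm hpIm
    have h2 : a (ph - p_I) (ph - p_I)
        = ⟪g' (ι yh) - g' (ι y), ι (ph - p_I)⟫ + a (p - p_I) (ph - p_I) := by
      rw [l0, l0, inner_sub_left, hpheq _ hmem, hp]
      ring
    have h3 : ⟪g' (ι yh) - g' (ι y), ι (ph - p_I)⟫
        ≤ (lg * (n * (κ * (H * S))) * n) * ‖ph - p_I‖ := by
      calc ⟪g' (ι yh) - g' (ι y), ι (ph - p_I)⟫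
          ≤ ‖g' (ι yh) - g' (ι y)‖ * ‖ι (ph - p_I)‖ := real_inner_le_norm _ _
        _ ≤ (lg * (n * (κ * (H * S)))) * (n * ‖ph - p_I‖) := by
            apply mul_le_mul hgd (ι.le_opNorm _) (norm_nonneg _) (by positivity)
        _ = (lg * (n * (κ * (H * S))) * n) * ‖ph - p_I‖ := by ring
    have h4 : a (p - p_I) (ph - p_I) ≤ (a_max * (cI * (H * S))) * ‖ph - p_I‖ := by
      calc a (p - p_I) (ph - p_I) ≤ a_max * ‖p - p_I‖ * ‖ph - p_I‖ :=
            (le_abs_self _).trans (hbdd _ _)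
        _ ≤ (a_max * (cI * (H * S))) * ‖ph - p_I‖ := by
            apply mul_le_mul_of_nonneg_right _ (norm_nonneg _)
            exact mul_le_mul_of_nonneg_left hpI ha_max.le
    have h5 : ‖ph - p_I‖
        ≤ (lg * (n * (κ * (H * S))) * n + a_max * (cI * (H * S))) / a_min := by
      apply coerc_div a_min _ _ ha_min (by positivity) (norm_nonneg _)
      calc a_min * ‖ph - p_I‖ ^ 2 ≤ a (ph - p_I) (ph - p_I) := hcoer _
        _ = ⟪g' (ι yh) - g' (ι y), ι (ph - p_I)⟫ + a (p - p_I) (ph - p_I) := h2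
        _ ≤ (lg * (n * (κ * (H * S))) * n + a_max * (cI * (H * S))) * ‖ph - p_I‖ := by
            rw [add_mul]; exact add_le_add h3 h4
    calc ‖p - ph‖ = ‖(p - p_I) - (ph - p_I)‖ := by rw [sub_sub_sub_cancel_right]
      _ ≤ ‖p - p_I‖ + ‖ph - p_I‖ := norm_sub_le _ _
      _ ≤ cI * (H * S) + (lg * (n * (κ * (H * S))) * n + a_max * (cI * (H * S))) / a_min :=
          add_le_add hpI h5
      _ = κ' * (H * S) := by rw [hκ'']; field_simp; ring
  -- discrete state error
  have hrelY : ∀ v ∈ V_H, a yh v - a y_H v = ⟪B (u - u_H), ι v⟫ := by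
    intro v hv
    rw [hyheq v hv, hdy v hv, ← inner_sub_left, map_sub]
    congr 1
    abel
  have hbe : ‖B (u - u_H)‖ ≤ cB * E :=
    (hB _).trans (mul_le_mul_of_nonneg_right (le_max_left _ _) (norm_nonneg _))
  have hyhyH : ‖yh - y_H‖ ≤ μ * E := by
    have hmem : yh - y_H ∈ V_H := V_H.sub_mem hyhm hyHm
    have h4 : ‖yh - y_H‖ ≤ cB * E * n / a_min := by
      apply coerc_div a_min _ _ ha_min (by positivity) (norm_nonneg _)
      calc a_min * ‖yh - y_H‖ ^ 2 ≤ a (yh - y_H) (yh - y_H) := hcoer _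
        _ = a yh (yh - y_H) - a y_H (yh - y_H) := l0 _ _ _
        _ = ⟪B (u - u_H), ι (yh - y_H)⟫ := hrelY _ hmem
        _ ≤ ‖B (u - u_H)‖ * ‖ι (yh - y_H)‖ := real_inner_le_norm _ _
        _ ≤ (cB * E) * (n * ‖yh - y_H‖) := by
            apply mul_le_mul hbe (ι.le_opNorm _) (norm_nonneg _) (by positivity)
        _ = cB * E * n * ‖yh - y_H‖ := by ring
    calc ‖yh - y_H‖ ≤ cB * E * n / a_min := h4
      _ = μ * E := by rw [hμ']; ring
  -- discrete adjoint error
  have hrelP : ∀ q ∈ V_H, a ph q - a p_H q = ⟪g' (ι yh) - g' (ι y_H), ι q⟫ := by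
    intro q hq
    rw [hpheq q hq, hdp q hq, ← inner_sub_left]
  have hgd2 : ‖g' (ι yh) - g' (ι y_H)‖ ≤ lg * (n * (μ * E)) := by
    calc ‖g' (ι yh) - g' (ι y_H)‖ ≤ L_g * ‖ι yh - ι y_H‖ := hgL _ _
      _ ≤ lg * ‖ι yh - ι y_H‖ :=
          mul_le_mul_of_nonneg_right (le_max_left _ _) (norm_nonneg _)
      _ ≤ lg * (n * (μ * E)) := by
          apply mul_le_mul_of_nonneg_left _ hlg
          calc ‖ι yh - ι y_H‖ = ‖ι (yh - y_H)‖ := by rw [map_sub]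
            _ ≤ n * ‖yh - y_H‖ := ι.le_opNorm _
            _ ≤ n * (μ * E) := mul_le_mul_of_nonneg_left hyhyH hn
  have hphpH : ‖ph - p_H‖ ≤ ν * E := by
    have hmem : ph - p_H ∈ V_H := V_H.sub_mem hphm hpHm
    have h4 : ‖ph - p_H‖ ≤ lg * (n * (μ * E)) * n / a_min := by
      apply coerc_div a_min _ _ ha_min (by positivity) (norm_nonneg _)
      calc a_min * ‖ph - p_H‖ ^ 2 ≤ a (ph - p_H) (ph - p_H) := hcoer _
        _ = a ph (ph - p_H) - a p_H (ph - p_H) := l0 _ _ _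
        _ = ⟪g' (ι yh) - g' (ι y_H), ι (ph - p_H)⟫ := hrelP _ hmem
        _ ≤ ‖g' (ι yh) - g' (ι y_H)‖ * ‖ι (ph - p_H)‖ := real_inner_le_norm _ _
        _ ≤ (lg * (n * (μ * E))) * (n * ‖ph - p_H‖) := by
            apply mul_le_mul hgd2 (ι.le_opNorm _) (norm_nonneg _) (by positivity)
        _ = lg * (n * (μ * E)) * n * ‖ph - p_H‖ := by ring
    calc ‖ph - p_H‖ ≤ lg * (n * (μ * E)) * n / a_min := h4
      _ = ν * E := by rw [hν', hμ']; ring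
  -- sign condition
  have hkey0 : 0 ≤ ⟪B (u - u_H), ι ph⟫ - ⟪B (u - u_H), ι p_H⟫ := by
    have e1 := hrelY ph hphm
    have e2 := hrelY p_H hpHm
    have e3 := hrelP yh hyhm
    have e4 := hrelP y_H hyHm
    have e5 := hgM (ι yh) (ι y_H)
    have e6 : (0:ℝ) ≤ M_g * ‖ι yh - ι y_H‖ ^ 2 := by positivity
    have s1 := hsym yh ph
    have s2 := hsym y_H ph
    have s3 := hsym yh p_H
    have s4 := hsym y_H p_H
    simp only [inner_sub_left, inner_sub_right] at e3 e4 e5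
    linarith
  have hkey0' : 0 ≤ ⟪ι ph, B (u - u_H)⟫ - ⟪ι p_H, B (u - u_H)⟫ := by
    rw [real_inner_comm (B (u - u_H)) (ι ph), real_inner_comm (B (u - u_H)) (ι p_H)]
    exact hkey0
  -- variational inequalities
  have hv1 : 0 ≤ ⟪h' u + (ContinuousLinearMap.adjoint B) (ι p), u_H - u⟫ :=
    hVI u_H (hKHK huH)
  have hv2 : 0 ≤ ⟪h' u_H + (ContinuousLinearMap.adjoint B) (ι p_H), ut - u_H⟫ :=
    hdVI ut hutK
  have hmono : M_h * E ^ 2 ≤ ⟪h' u - h' u_H, u - u_H⟫ := hhM u u_H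
  have hident : ⟪h' u - h' u_H, u - u_H⟫ + ⟪h' u + (ContinuousLinearMap.adjoint B) (ι p), u_H - u⟫
      + ⟪h' u_H + (ContinuousLinearMap.adjoint B) (ι p_H), ut - u_H⟫
      = (⟪ι p_H, B (u - u_H)⟫ - ⟪ι p, B (u - u_H)⟫)
        + ⟪h' u_H + (ContinuousLinearMap.adjoint B) (ι p_H), ut - u⟫ := by
    simp only [inner_sub_left, inner_add_left, inner_sub_right, map_sub,
      ContinuousLinearMap.adjoint_inner_left]
    ring
  -- bound first RHS term
  have hT1 : ⟪ι p_H, B (u - u_H)⟫ - ⟪ι ph, B (u - u_H)⟫ ≤ 0 := by linarith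
  have hiphp : ‖ι ph - ι p‖ ≤ n * (κ' * (H * S)) := by
    calc ‖ι ph - ι p‖ = ‖ι (ph - p)‖ := by rw [map_sub]
      _ ≤ n * ‖ph - p‖ := ι.le_opNorm _
      _ = n * ‖p - ph‖ := by rw [norm_sub_rev]
      _ ≤ n * (κ' * (H * S)) := mul_le_mul_of_nonneg_left hpph hn
  have hT2 : ⟪ι ph, B (u - u_H)⟫ - ⟪ι p, B (u - u_H)⟫ ≤ n * (κ' * (H * S)) * (cB * E) := by
    rw [← inner_sub_left]
    calc ⟪ι ph - ι p, B (u - u_H)⟫ ≤ ‖ι ph - ι p‖ * ‖B (u - u_H)‖ := real_inner_le_norm _ _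
      _ ≤ n * (κ' * (H * S)) * (cB * E) :=
          mul_le_mul hiphp hbe (norm_nonneg _) (by positivity)
  have hTerm1 : ⟪ι p_H, B (u - u_H)⟫ - ⟪ι p, B (u - u_H)⟫ ≤ n * (κ' * (H * S)) * (cB * E) := by
    linarith
  -- bound second RHS term
  have hident2 : ⟪h' u_H + (ContinuousLinearMap.adjoint B) (ι p_H), ut - u⟫
      = ⟪h' u + (ContinuousLinearMap.adjoint B) (ι p), ut - u⟫
        + ⟪h' u_H - h' u, ut - u⟫ + (⟪ι p_H, B (ut - u)⟫ - ⟪ι p, B (ut - u)⟫) := by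
    simp only [inner_sub_left, inner_add_left, ContinuousLinearMap.adjoint_inner_left]
    ring
  have hhd : ‖h' u_H - h' u‖ ≤ lh * E := by
    calc ‖h' u_H - h' u‖ ≤ L_h * ‖u_H - u‖ := hhL _ _
      _ ≤ lh * ‖u_H - u‖ := mul_le_mul_of_nonneg_right (le_max_left _ _) (norm_nonneg _)
      _ = lh * E := by rw [norm_sub_rev]
  have hutu : ‖ut - u‖ ≤ ε₁ := by rw [norm_sub_rev]; exact hut1
  have hS2 : ⟪h' u_H - h' u, ut - u⟫ ≤ lh * E * ε₁ := by
    calc ⟪h' u_H - h' u, ut - u⟫ ≤ ‖h' u_H - h' u‖ * ‖ut - u‖ := real_inner_le_norm _ _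
      _ ≤ (lh * E) * ε₁ := mul_le_mul hhd hutu (norm_nonneg _) (by positivity)
  have hpHp : ‖ι p_H - ι p‖ ≤ n * (κ' * (H * S) + ν * E) := by
    calc ‖ι p_H - ι p‖ = ‖ι (p_H - p)‖ := by rw [map_sub]
      _ ≤ n * ‖p_H - p‖ := ι.le_opNorm _
      _ ≤ n * (κ' * (H * S) + ν * E) := by
          apply mul_le_mul_of_nonneg_left _ hn
          calc ‖p_H - p‖ = ‖(ph - p) - (ph - p_H)‖ := by rw [sub_sub_sub_cancel_left]
            _ ≤ ‖ph - p‖ + ‖ph - p_H‖ := norm_sub_le _ _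
            _ = ‖p - ph‖ + ‖ph - p_H‖ := by rw [norm_sub_rev ph p]
            _ ≤ κ' * (H * S) + ν * E := add_le_add hpph hphpH
  have hbut : ‖B (ut - u)‖ ≤ cB * ε₁ := by
    calc ‖B (ut - u)‖ ≤ C_B * ‖ut - u‖ := hB _
      _ ≤ cB * ‖ut - u‖ := mul_le_mul_of_nonneg_right (le_max_left _ _) (norm_nonneg _)
      _ ≤ cB * ε₁ := mul_le_mul_of_nonneg_left hutu hcB
  have hS3 : ⟪ι p_H, B (ut - u)⟫ - ⟪ι p, B (ut - u)⟫
      ≤ n * (κ' * (H * S) + ν * E) * (cB * ε₁) := by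
    rw [← inner_sub_left]
    calc ⟪ι p_H - ι p, B (ut - u)⟫ ≤ ‖ι p_H - ι p‖ * ‖B (ut - u)‖ := real_inner_le_norm _ _
      _ ≤ n * (κ' * (H * S) + ν * E) * (cB * ε₁) :=
          mul_le_mul hpHp hbut (norm_nonneg _) (by positivity)
  have hTerm2 : ⟪h' u_H + (ContinuousLinearMap.adjoint B) (ι p_H), ut - u⟫
      ≤ ε₁ ^ 2 + lh * E * ε₁ + n * (κ' * (H * S) + ν * E) * (cB * ε₁) := by
    rw [hident2]
    linarith [hut2, hS2, hS3]
  -- master control inequality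
  have hquad : M_h * E ^ 2 ≤ β * D * E + (1 + β) * D ^ 2 := by
    have hmain : M_h * E ^ 2 ≤ n * (κ' * (H * S)) * (cB * E) + (ε₁ ^ 2 + lh * E * ε₁
        + n * (κ' * (H * S) + ν * E) * (cB * ε₁)) := by
      linarith [hmono, hv1, hv2, hident, hTerm1, hTerm2]
    have b1 : n * (κ' * (H * S)) * (cB * E) ≤ (cB * n * κ') * D * E := by
      have : n * (κ' * (H * S)) * (cB * E) = (cB * n * κ') * ((H * S) * E) := by ring
      rw [this]
      calc (cB * n * κ') * ((H * S) * E) ≤ (cB * n * κ') * (D * E) := by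
            apply mul_le_mul_of_nonneg_left _ (by positivity)
            exact mul_le_mul_of_nonneg_right hHSD hEnn
        _ = (cB * n * κ') * D * E := by ring
    have b2 : ε₁ ^ 2 ≤ D ^ 2 := by
      apply pow_le_pow_left₀ hε₁ hε₁D
    have b3 : lh * E * ε₁ ≤ lh * D * E := by
      have : lh * E * ε₁ = lh * (ε₁ * E) := by ring
      rw [this]
      calc lh * (ε₁ * E) ≤ lh * (D * E) := by
            apply mul_le_mul_of_nonneg_left _ hlh
            exact mul_le_mul_of_nonneg_right hε₁D hEnn
        _ = lh * D * E := by ring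
    have b4 : n * (κ' * (H * S) + ν * E) * (cB * ε₁)
        ≤ (cB * n * κ') * D ^ 2 + (cB * n * ν) * D * E := by
      have expand : n * (κ' * (H * S) + ν * E) * (cB * ε₁)
          = (cB * n * κ') * ((H * S) * ε₁) + (cB * n * ν) * (E * ε₁) := by ring
      rw [expand]
      have c1 : (cB * n * κ') * ((H * S) * ε₁) ≤ (cB * n * κ') * D ^ 2 := by
        apply mul_le_mul_of_nonneg_left _ (by positivity)
        calc (H * S) * ε₁ ≤ D * D := mul_le_mul hHSD hε₁D hε₁ hDnn
          _ = D ^ 2 := by ring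
      have c2 : (cB * n * ν) * (E * ε₁) ≤ (cB * n * ν) * D * E := by
        calc (cB * n * ν) * (E * ε₁) ≤ (cB * n * ν) * (E * D) := by
              apply mul_le_mul_of_nonneg_left _ (by positivity)
              exact mul_le_mul_of_nonneg_left hε₁D hEnn
          _ = (cB * n * ν) * D * E := by ring
      linarith
    calc M_h * E ^ 2 ≤ n * (κ' * (H * S)) * (cB * E) + (ε₁ ^ 2 + lh * E * ε₁
        + n * (κ' * (H * S) + ν * E) * (cB * ε₁)) := hmain
      _ ≤ (cB * n * κ') * D * E + (D ^ 2 + lh * D * E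
          + ((cB * n * κ') * D ^ 2 + (cB * n * ν) * D * E)) := by linarith
      _ ≤ β * D * E + (1 + β) * D ^ 2 := by
          have w1 : 0 ≤ lh * D ^ 2 := mul_nonneg hlh (sq_nonneg D)
          have w2 : 0 ≤ (cB * n * ν) * D ^ 2 :=
            mul_nonneg (mul_nonneg (mul_nonneg hcB hn) hν) (sq_nonneg D)
          rw [hβ']
          linarith [w1, w2]
  have hqE : E ≤ k * D := by
    have hq := quad_bound M_h E β (1 + β) D hMh hEnn hβ (by linarith) hDnn hquad
    calc E ≤ ((β ^ 2 + 2 * (1 + β) * M_h) / M_h ^ 2 + 1) * D := hq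
      _ = k * D := by rw [hk']
  have hyfinal : ‖y - y_H‖ ≤ κ * D + μ * (k * D) := by
    calc ‖y - y_H‖ = ‖(y - yh) + (yh - y_H)‖ := by rw [sub_add_sub_cancel]
      _ ≤ ‖y - yh‖ + ‖yh - y_H‖ := norm_add_le _ _
      _ ≤ κ * (H * S) + μ * E := add_le_add hyyh hyhyH
      _ ≤ κ * D + μ * (k * D) := add_le_add (mul_le_mul_of_nonneg_left hHSD hκ)
            (mul_le_mul_of_nonneg_left hqE hμ)
  have hpfinal : ‖p - p_H‖ ≤ κ' * D + ν * (k * D) := by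
    calc ‖p - p_H‖ = ‖(p - ph) + (ph - p_H)‖ := by rw [sub_add_sub_cancel]
      _ ≤ ‖p - ph‖ + ‖ph - p_H‖ := norm_add_le _ _
      _ ≤ κ' * (H * S) + ν * E := add_le_add hpph hphpH
      _ ≤ κ' * D + ν * (k * D) := add_le_add (mul_le_mul_of_nonneg_left hHSD hκ'nn)
            (mul_le_mul_of_nonneg_left hqE hν)
  linarith [hyfinal, hpfinal, hqE]
end

section
/- Let V, Y, U be real Hilbert spaces, ι : V → Y bounded, a : V × V → ℝ a bounded coercive bilinear form (coercivity constant a_min > 0), B : U → Y bounded with ‖Bw‖_Y ≤ C_B‖w‖_U and adjoint B*, g' : Y → Y Lipschitz with constant L_g, h' : U → U Lipschitz with constant L_h and strongly monotone with constant M_h > 0, f ∈ Y, and K ⊆ U nonempty closed convex with metric projection P_K. Suppose (y_H, p_H, u_H) satisfies: u_H ∈ K, a(y_H,v) = ⟪f + Bu_H, ιv⟫_Y and a(p_H,q) = ⟪g'(ι y_H), ιq⟫_Y for all v, q ∈ V, and ⟪h'(u_H) + B*(ι p_H), w − u_H⟫_U ≥ 0 for all w ∈ K. Given u⁽⁰⁾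 ∈ U and ρ > 0, define the iteration: y⁽ⁿ⁾, p⁽ⁿ⁾ ∈ V solve a(y⁽ⁿ⁾,v) = ⟪f + Bu⁽ⁿ⁾, ιv⟫_Y and a(p⁽ⁿ⁾,q) = ⟪g'(ι y⁽ⁿ⁾), ιq⟫_Y for all v, q ∈ V, and u⁽ⁿ⁺¹⁾ = P_K(u⁽ⁿ⁾ − ρ(h'(u⁽ⁿ⁾) + B*(ι p⁽ⁿ⁾))). Set C_p := L_g C_B² ‖ι‖⁴ / a_min². If δ ∈ (0,1) and ρ satisfy 1 − 2ρM_h + 2ρ²L_h² + 2ρC_p + 2ρ²C_p² ≤ δ², then for all n ≥ 0: ‖u⁽ⁿ⁾ − u_H‖_U ≤ δⁿ‖u⁽⁰⁾ − u_H‖_U, ‖y⁽ⁿ⁾ − y_H‖_V ≤ (‖ι‖C_B/a_min) δⁿ‖u⁽⁰⁾ − u_H‖_U, and ‖p⁽ⁿ⁾ − p_H‖_V ≤ (L_g‖ι‖³C_B/a_min²) δⁿ‖u⁽⁰⁾ − u_H‖_U. -/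
open scoped RealInnerProductSpace

private lemma aux_sq {s m : ℝ} (h : s ^ 2 ≤ m * s) (hs : 0 ≤ s) (hm : 0 ≤ m) : s ≤ m := by
  nlinarith

private lemma aux_sqle {s m : ℝ} (h : s ^ 2 ≤ m ^ 2) (hs : 0 ≤ s) (hm : 0 ≤ m) : s ≤ m := by
  nlinarith [sq_nonneg (s + m), sq_nonneg (s - m)]

private lemma aux_mulmono {c t s : ℝ} (ht : 0 ≤ t) (hts : t ≤ s) (h1 : 0 ≤ c * t)
    (h2 : 0 ≤ c * s) : c * t ≤ c * s := by
  rcases le_or_gt 0 c with hc | hc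
  · exact mul_le_mul_of_nonneg_left hts hc
  · have ht0 : t = 0 := le_antisymm (by nlinarith) ht
    rw [ht0, mul_zero]; exact h2


set_option maxHeartbeats 2000000 in
/-- Geometric convergence of the projected gradient algorithm (Theorem 5.2,
abstract form): here `V` plays the role of the coarse space `V_H`, the iterates
`u n`, `y n`, `p n` follow Algorithm 1 with step size `ρ`, and
`C_p = L_g C_B² ‖ι‖⁴ / a_min²`. -/
theorem stmt11
    {V Y U : Type*}
    [NormedAddCommGroup V] [InnerProductSpace ℝ V] [CompleteSpace V]
    [NormedAddCommGroup Y] [InnerProductSpace ℝ Y] [CompleteSpace Y]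
    [NormedAddCommGroup U] [InnerProductSpace ℝ U] [CompleteSpace U]
    (ι : V →L[ℝ] Y)
    (a : V →ₗ[ℝ] V →ₗ[ℝ] ℝ)
    (a_min a_max C_B L_g L_h M_h : ℝ)
    (ha_min : 0 < a_min) (hMh : 0 < M_h)
    (hbound : ∀ v w : V, |a v w| ≤ a_max * ‖v‖ * ‖w‖)
    (hcoer : ∀ v : V, a_min * ‖v‖ ^ 2 ≤ a v v)
    (B : U →L[ℝ] Y) (hB : ∀ w : U, ‖B w‖ ≤ C_B * ‖w‖)
    (g' : Y → Y) (hg : ∀ y₁ y₂ : Y, ‖g' y₁ - g' y₂‖ ≤ L_g * ‖y₁ - y₂‖)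
    (h' : U → U)
    (hh : ∀ u₁ u₂ : U, ‖h' u₁ - h' u₂‖ ≤ L_h * ‖u₁ - u₂‖)
    (hhmono : ∀ u₁ u₂ : U, M_h * ‖u₁ - u₂‖ ^ 2 ≤ ⟪h' u₁ - h' u₂, u₁ - u₂⟫)
    (f : Y)
    (K : Set U) (hKne : K.Nonempty) (hKclosed : IsClosed K) (hKconv : Convex ℝ K)
    -- the discrete optimality system
    (y_H p_H : V) (u_H : U) (hu_H : u_H ∈ K)
    (hy_H : ∀ v : V, a y_H v = ⟪f + B u_H, ι v⟫)
    (hp_H : ∀ q : V, a p_H q = ⟪g' (ι y_H), ι q⟫)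
    (hVI : ∀ w ∈ K, 0 ≤ ⟪h' u_H + (ContinuousLinearMap.adjoint B) (ι p_H), w - u_H⟫)
    -- the iteration
    (ρ δ : ℝ) (hρ : 0 < ρ) (hδ0 : 0 < δ) (hδ1 : δ < 1)
    (u : ℕ → U) (y p : ℕ → V)
    (hy : ∀ n, ∀ v : V, a (y n) v = ⟪f + B (u n), ι v⟫)
    (hp : ∀ n, ∀ q : V, a (p n) q = ⟪g' (ι (y n)), ι q⟫)
    (hproj : ∀ n, u (n + 1) ∈ K ∧
      ∀ k ∈ K, 0 ≤ ⟪u (n + 1) -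
        (u n - ρ • (h' (u n) + (ContinuousLinearMap.adjoint B) (ι (p n)))), k - u (n + 1)⟫)
    -- the step size condition, with C_p = L_g C_B² ‖ι‖⁴ / a_min²
    (C_p : ℝ) (hCp : C_p = L_g * C_B ^ 2 * ‖ι‖ ^ 4 / a_min ^ 2)
    (hstep : 1 - 2 * ρ * M_h + 2 * ρ ^ 2 * L_h ^ 2 + 2 * ρ * C_p + 2 * ρ ^ 2 * C_p ^ 2 ≤ δ ^ 2) :
    ∀ n : ℕ,
      ‖u n - u_H‖ ≤ δ ^ n * ‖u 0 - u_H‖ ∧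
      ‖y n - y_H‖ ≤ ‖ι‖ * C_B / a_min * (δ ^ n * ‖u 0 - u_H‖) ∧
      ‖p n - p_H‖ ≤ L_g * ‖ι‖ ^ 3 * C_B / a_min ^ 2 * (δ ^ n * ‖u 0 - u_H‖) := by
  classical
  -- basic nonnegativity fact
  have key0 : ∀ w : U, 0 ≤ C_B * ‖w‖ := fun w => (norm_nonneg (B w)).trans (hB w)
  -- coercivity bound
  have hcoerb : ∀ (E : V) (c : ℝ), 0 ≤ c → a E E ≤ c * ‖E‖ → ‖E‖ ≤ c / a_min := by
    intro E c hc hac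
    rcases (norm_nonneg E).eq_or_lt with h0 | h0
    · rw [← h0]; positivity
    · rw [le_div_iff₀ ha_min]
      have h1 := hcoer E
      nlinarith
  have hasub : ∀ (x₁ x₂ z : V), a (x₁ - x₂) z = a x₁ z - a x₂ z := by
    intro x₁ x₂ z
    rw [map_sub, LinearMap.sub_apply]
  -- stability of the state equation
  have hy_stab : ∀ n, ‖y n - y_H‖ ≤ C_B * ‖u n - u_H‖ * ‖ι‖ / a_min := by
    intro n
    apply hcoerb _ _ (mul_nonneg (key0 _) (norm_nonneg _))
    have hEq : a (y n - y_H) (y n - y_H) = ⟪B (u n - u_H), ι (y n - y_H)⟫ := by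
      rw [hasub, hy n, hy_H, ← inner_sub_left]
      congr 1
      rw [map_sub]; abel
    rw [hEq]
    calc ⟪B (u n - u_H), ι (y n - y_H)⟫ ≤ ‖B (u n - u_H)‖ * ‖ι (y n - y_H)‖ :=
          real_inner_le_norm _ _
      _ ≤ (C_B * ‖u n - u_H‖) * (‖ι‖ * ‖y n - y_H‖) :=
          mul_le_mul (hB _) (ι.le_opNorm _) (norm_nonneg _) (key0 _)
      _ = C_B * ‖u n - u_H‖ * ‖ι‖ * ‖y n - y_H‖ := by ring
  -- the unified stability facts
  obtain ⟨hSY, hSP, hSP0, hq⟩ :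
      (∀ n, ‖y n - y_H‖ ≤ ‖ι‖ * C_B / a_min * ‖u n - u_H‖) ∧
      (∀ n, ‖p n - p_H‖ ≤ L_g * ‖ι‖ ^ 3 * C_B / a_min ^ 2 * ‖u n - u_H‖) ∧
      (∀ n, 0 ≤ L_g * ‖ι‖ ^ 3 * C_B / a_min ^ 2 * ‖u n - u_H‖) ∧
      (∀ n, ‖(ContinuousLinearMap.adjoint B) (ι (p n)) -
          (ContinuousLinearMap.adjoint B) (ι p_H)‖ ≤ C_p * ‖u n - u_H‖) := by
    have hSYgen : ∀ n, ‖y n - y_H‖ ≤ ‖ι‖ * C_B / a_min * ‖u n - u_H‖ := by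
      intro n
      have h := hy_stab n
      have : C_B * ‖u n - u_H‖ * ‖ι‖ / a_min = ‖ι‖ * C_B / a_min * ‖u n - u_H‖ := by ring
      linarith [this ▸ h]
    rcases le_or_gt 0 L_g with hLg | hLg
    · -- generic case : L_g ≥ 0
      have hSPa : ∀ n, ‖p n - p_H‖ ≤ L_g * ‖ι‖ ^ 3 * C_B / a_min ^ 2 * ‖u n - u_H‖ := by
        intro n
        have hc0 : 0 ≤ L_g * ‖ι‖ * (C_B * ‖u n - u_H‖ * ‖ι‖ / a_min) * ‖ι‖ :=
          mul_nonneg (mul_nonneg (mul_nonneg hLg (norm_nonneg _))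
            (div_nonneg (mul_nonneg (key0 _) (norm_nonneg _)) ha_min.le)) (norm_nonneg _)
        have h := hcoerb (p n - p_H) (L_g * ‖ι‖ * (C_B * ‖u n - u_H‖ * ‖ι‖ / a_min) * ‖ι‖) hc0 ?_
        · have heq : L_g * ‖ι‖ * (C_B * ‖u n - u_H‖ * ‖ι‖ / a_min) * ‖ι‖ / a_min
              = L_g * ‖ι‖ ^ 3 * C_B / a_min ^ 2 * ‖u n - u_H‖ := by
            field_simp
          linarith [heq ▸ h]
        · have hEq : a (p n - p_H) (p n - p_H)
              = ⟪g' (ι (y n)) - g' (ι y_H), ι (p n - p_H)⟫ := by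
            rw [hasub, hp n, hp_H, ← inner_sub_left]
          rw [hEq]
          have h1 : ‖ι (y n) - ι y_H‖ ≤ ‖ι‖ * ‖y n - y_H‖ := by
            rw [← map_sub]; exact ι.le_opNorm _
          have h2 : ‖y n - y_H‖ ≤ C_B * ‖u n - u_H‖ * ‖ι‖ / a_min := hy_stab n
          calc ⟪g' (ι (y n)) - g' (ι y_H), ι (p n - p_H)⟫
              ≤ ‖g' (ι (y n)) - g' (ι y_H)‖ * ‖ι (p n - p_H)‖ := real_inner_le_norm _ _
            _ ≤ (L_g * ‖ι (y n) - ι y_H‖) * (‖ι‖ * ‖p n - p_H‖) :=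
                mul_le_mul (hg _ _) (ι.le_opNorm _) (norm_nonneg _)
                  (mul_nonneg hLg (norm_nonneg _))
            _ ≤ (L_g * (‖ι‖ * (C_B * ‖u n - u_H‖ * ‖ι‖ / a_min))) * (‖ι‖ * ‖p n - p_H‖) := by
                apply mul_le_mul_of_nonneg_right _ (mul_nonneg (norm_nonneg _) (norm_nonneg _))
                apply mul_le_mul_of_nonneg_left _ hLg
                calc ‖ι (y n) - ι y_H‖ ≤ ‖ι‖ * ‖y n - y_H‖ := h1
                  _ ≤ ‖ι‖ * (C_B * ‖u n - u_H‖ * ‖ι‖ / a_min) :=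
                      mul_le_mul_of_nonneg_left h2 (norm_nonneg _)
            _ = L_g * ‖ι‖ * (C_B * ‖u n - u_H‖ * ‖ι‖ / a_min) * ‖ι‖ * ‖p n - p_H‖ := by ring
      have hSP0a : ∀ n, 0 ≤ L_g * ‖ι‖ ^ 3 * C_B / a_min ^ 2 * ‖u n - u_H‖ := by
        intro n
        have h := mul_nonneg (mul_nonneg hLg (pow_nonneg (norm_nonneg ι) 3))
          (key0 (u n - u_H))
        have h2 : L_g * ‖ι‖ ^ 3 * C_B / a_min ^ 2 * ‖u n - u_H‖
            = (L_g * ‖ι‖ ^ 3 * (C_B * ‖u n - u_H‖)) / a_min ^ 2 := by ring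
        rw [h2]; exact div_nonneg h (by positivity)
      have hqa : ∀ n, ‖(ContinuousLinearMap.adjoint B) (ι (p n)) -
          (ContinuousLinearMap.adjoint B) (ι p_H)‖ ≤ C_p * ‖u n - u_H‖ := by
        intro n
        set q : U := (ContinuousLinearMap.adjoint B) (ι (p n)) -
          (ContinuousLinearMap.adjoint B) (ι p_H) with hqdef
        have hq1 : q = (ContinuousLinearMap.adjoint B) (ι (p n - p_H)) := by
          rw [hqdef, ← map_sub, ← map_sub]
        have hCpe : 0 ≤ C_p * ‖u n - u_H‖ := by
          rw [hCp]
          have h2 : L_g * C_B ^ 2 * ‖ι‖ ^ 4 / a_min ^ 2 * ‖u n - u_H‖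
              = (L_g * C_B ^ 2 * ‖ι‖ ^ 4 * ‖u n - u_H‖) / a_min ^ 2 := by ring
          rw [h2]
          exact div_nonneg (mul_nonneg (mul_nonneg (mul_nonneg hLg (sq_nonneg C_B))
            (by positivity)) (norm_nonneg _)) (by positivity)
        have hsq : ‖q‖ ^ 2 ≤ (C_p * ‖u n - u_H‖) * ‖q‖ := by
          have h1 : ⟪q, q⟫ = ⟪ι (p n - p_H), B q⟫ := by
            rw [hq1]; exact ContinuousLinearMap.adjoint_inner_left B _ _
          have h2 : ‖q‖ ^ 2 = ⟪ι (p n - p_H), B q⟫ := by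
            rw [← h1, real_inner_self_eq_norm_sq]
          rw [h2]
          calc ⟪ι (p n - p_H), B q⟫ ≤ ‖ι (p n - p_H)‖ * ‖B q‖ := real_inner_le_norm _ _
            _ ≤ (‖ι‖ * ‖p n - p_H‖) * (C_B * ‖q‖) :=
                mul_le_mul (ι.le_opNorm _) (hB _) (norm_nonneg _)
                  (mul_nonneg (norm_nonneg _) (norm_nonneg _))
            _ ≤ (‖ι‖ * (L_g * ‖ι‖ ^ 3 * C_B / a_min ^ 2 * ‖u n - u_H‖)) * (C_B * ‖q‖) := by
                apply mul_le_mul_of_nonneg_right _ (key0 q)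
                exact mul_le_mul_of_nonneg_left (hSPa n) (norm_nonneg _)
            _ = (L_g * C_B ^ 2 * ‖ι‖ ^ 4 / a_min ^ 2 * ‖u n - u_H‖) * ‖q‖ := by ring
            _ = (C_p * ‖u n - u_H‖) * ‖q‖ := by rw [hCp]
        exact aux_sq hsq (norm_nonneg _) hCpe
      exact ⟨hSYgen, hSPa, hSP0a, hqa⟩
    · -- degenerate case : L_g < 0, hence Y is trivial and ι = 0
      have hY0 : ∀ z : Y, z = 0 := by
        intro z
        have h1 := hg z 0
        have h2 : (0 : ℝ) ≤ L_g * ‖z - 0‖ := le_trans (norm_nonneg _) h1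
        have h3 : ‖z - 0‖ ≤ 0 := by nlinarith [norm_nonneg (z - 0)]
        have h4 : z - 0 = 0 := norm_le_zero_iff.mp h3
        simpa using h4
      have hι0 : ∀ v : V, ι v = 0 := fun v => hY0 _
      have hιn : ‖ι‖ = 0 := by
        have : ι = 0 := by ext v; simpa using hι0 v
        rw [this]; exact norm_zero
      have hSPb : ∀ n, ‖p n - p_H‖ ≤ L_g * ‖ι‖ ^ 3 * C_B / a_min ^ 2 * ‖u n - u_H‖ := by
        intro n
        have hEq : a (p n - p_H) (p n - p_H) = 0 := by
          rw [hasub, hp n, hp_H, hι0 (p n - p_H)]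
          simp
        have h := hcoerb (p n - p_H) 0 le_rfl (by rw [hEq]; simp)
        rw [hιn]
        have : L_g * (0 : ℝ) ^ 3 * C_B / a_min ^ 2 * ‖u n - u_H‖ = 0 := by ring
        rw [this]
        simpa using h
      have hSP0b : ∀ n, 0 ≤ L_g * ‖ι‖ ^ 3 * C_B / a_min ^ 2 * ‖u n - u_H‖ := by
        intro n
        rw [hιn]
        have : L_g * (0 : ℝ) ^ 3 * C_B / a_min ^ 2 * ‖u n - u_H‖ = 0 := by ring
        rw [this]
      have hqb : ∀ n, ‖(ContinuousLinearMap.adjoint B) (ι (p n)) -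
          (ContinuousLinearMap.adjoint B) (ι p_H)‖ ≤ C_p * ‖u n - u_H‖ := by
        intro n
        have h1 : C_p * ‖u n - u_H‖ = 0 := by rw [hCp, hιn]; ring
        rw [h1, hι0 (p n), hι0 p_H]
        simp
      exact ⟨hSYgen, hSPb, hSP0b, hqb⟩
  -- the contraction estimate
  have hcontr : ∀ n, ‖u (n + 1) - u_H‖ ≤ δ * ‖u n - u_H‖ := by
    intro n
    set e : U := u n - u_H with he
    set d : U := h' (u n) - h' u_H with hd
    set q : U := (ContinuousLinearMap.adjoint B) (ι (p n)) -
      (ContinuousLinearMap.adjoint B) (ι p_H) with hqd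
    set X : U := e - ρ • (d + q) with hX
    set w : U := u n - ρ • (h' (u n) + (ContinuousLinearMap.adjoint B) (ι (p n))) with hw
    -- nonexpansiveness step
    have A1 : 0 ≤ ⟪u (n + 1) - w, u_H - u (n + 1)⟫ := (hproj n).2 u_H hu_H
    have A2 : 0 ≤ ⟪h' u_H + (ContinuousLinearMap.adjoint B) (ι p_H), u (n + 1) - u_H⟫ :=
      hVI _ (hproj n).1
    have hvec : X - (u (n + 1) - u_H) =
        (w - u (n + 1)) + ρ • (h' u_H + (ContinuousLinearMap.adjoint B) (ι p_H)) := by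
      rw [hX, he, hd, hqd, hw]
      module
    have key : ‖u (n + 1) - u_H‖ ^ 2 ≤ ⟪X, u (n + 1) - u_H⟫ := by
      have h1 : ⟪X - (u (n + 1) - u_H), u (n + 1) - u_H⟫
          = ⟪u (n + 1) - w, u_H - u (n + 1)⟫
            + ρ * ⟪h' u_H + (ContinuousLinearMap.adjoint B) (ι p_H), u (n + 1) - u_H⟫ := by
        rw [hvec, inner_add_left, real_inner_smul_left]
        congr 1
        have hneg : w - u (n + 1) = -(u (n + 1) - w) := by abel
        have hneg2 : u (n + 1) - u_H = -(u_H - u (n + 1)) := by abel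
        rw [hneg, hneg2, inner_neg_neg]
      have h2 : ⟪X - (u (n + 1) - u_H), u (n + 1) - u_H⟫
          = ⟪X, u (n + 1) - u_H⟫ - ⟪u (n + 1) - u_H, u (n + 1) - u_H⟫ :=
        inner_sub_left _ _ _
      have h3 : ⟪u (n + 1) - u_H, u (n + 1) - u_H⟫ = ‖u (n + 1) - u_H‖ ^ 2 :=
        real_inner_self_eq_norm_sq _
      have h4 := mul_nonneg hρ.le A2
      linarith
    have hle1 : ‖u (n + 1) - u_H‖ ≤ ‖X‖ := by
      have h1 : ‖u (n + 1) - u_H‖ ^ 2 ≤ ‖X‖ * ‖u (n + 1) - u_H‖ :=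
        key.trans (real_inner_le_norm _ _)
      exact aux_sq h1 (norm_nonneg _) (norm_nonneg _)
    -- bound ‖X‖ by δ ‖e‖
    have hqe : ‖q‖ ≤ C_p * ‖e‖ := hq n
    have hde : ‖d‖ ≤ L_h * ‖e‖ := hh _ _
    have hmono' : M_h * ‖e‖ ^ 2 ≤ ⟪e, d⟫ := by
      rw [real_inner_comm]; exact hhmono _ _
    have expand : ‖X‖ ^ 2 = ‖e‖ ^ 2 - 2 * ρ * ⟪e, d⟫ - 2 * ρ * ⟪e, q⟫
        + ρ ^ 2 * (‖d‖ ^ 2 + 2 * ⟪d, q⟫ + ‖q‖ ^ 2) := by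
      have h1 : ‖X‖ ^ 2 = ‖e‖ ^ 2 - 2 * ⟪e, ρ • (d + q)⟫ + ‖ρ • (d + q)‖ ^ 2 := by
        rw [hX]; exact norm_sub_sq_real _ _
      have h2 : ⟪e, ρ • (d + q)⟫ = ρ * (⟪e, d⟫ + ⟪e, q⟫) := by
        rw [real_inner_smul_right, inner_add_right]
      have h3 : ‖ρ • (d + q)‖ ^ 2 = ρ ^ 2 * (‖d‖ ^ 2 + 2 * ⟪d, q⟫ + ‖q‖ ^ 2) := by
        rw [norm_smul, mul_pow, norm_add_sq_real]
        simp [sq_abs]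
      rw [h1, h2, h3]; ring
    have hd2 : ‖d‖ ^ 2 ≤ L_h ^ 2 * ‖e‖ ^ 2 := by nlinarith [norm_nonneg d, norm_nonneg e]
    have hq2 : ‖q‖ ^ 2 ≤ C_p ^ 2 * ‖e‖ ^ 2 := by nlinarith [norm_nonneg q, norm_nonneg e]
    have hb4 : -(‖e‖ * ‖q‖) ≤ ⟪e, q⟫ := by
      have h := abs_real_inner_le_norm e q
      have h2 := neg_abs_le (⟪e, q⟫)
      linarith [abs_nonneg (⟪e, q⟫), le_abs_self (⟪e, q⟫), h, h2]
    have hqe2 : ‖e‖ * ‖q‖ ≤ C_p * ‖e‖ ^ 2 := by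
      have := mul_le_mul_of_nonneg_left hqe (norm_nonneg e)
      nlinarith
    have hdq : ⟪d, q⟫ ≤ ‖d‖ * ‖q‖ := real_inner_le_norm _ _
    have h2dq : 2 * (‖d‖ * ‖q‖) ≤ ‖d‖ ^ 2 + ‖q‖ ^ 2 := by nlinarith [sq_nonneg (‖d‖ - ‖q‖)]
    have hstep' : (1 - 2 * ρ * M_h + 2 * ρ ^ 2 * L_h ^ 2 + 2 * ρ * C_p
        + 2 * ρ ^ 2 * C_p ^ 2) * ‖e‖ ^ 2 ≤ δ ^ 2 * ‖e‖ ^ 2 :=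
      mul_le_mul_of_nonneg_right hstep (sq_nonneg _)
    have hX2 : ‖X‖ ^ 2 ≤ δ ^ 2 * ‖e‖ ^ 2 := by
      have t1 : 2 * ρ * (M_h * ‖e‖ ^ 2) ≤ 2 * ρ * ⟪e, d⟫ :=
        mul_le_mul_of_nonneg_left hmono' (by positivity)
      have t2 : -(2 * ρ * ⟪e, q⟫) ≤ 2 * ρ * (C_p * ‖e‖ ^ 2) := by
        have h1 : -(⟪e, q⟫) ≤ C_p * ‖e‖ ^ 2 := by linarith
        nlinarith [hρ.le]
      have t3 : ρ ^ 2 * ‖d‖ ^ 2 ≤ ρ ^ 2 * (L_h ^ 2 * ‖e‖ ^ 2) :=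
        mul_le_mul_of_nonneg_left hd2 (sq_nonneg _)
      have t4 : ρ ^ 2 * (2 * ⟪d, q⟫) ≤ ρ ^ 2 * (L_h ^ 2 * ‖e‖ ^ 2 + C_p ^ 2 * ‖e‖ ^ 2) := by
        apply mul_le_mul_of_nonneg_left _ (sq_nonneg ρ)
        nlinarith
      have t5 : ρ ^ 2 * ‖q‖ ^ 2 ≤ ρ ^ 2 * (C_p ^ 2 * ‖e‖ ^ 2) :=
        mul_le_mul_of_nonneg_left hq2 (sq_nonneg _)
      nlinarith [expand, t1, t2, t3, t4, t5, hstep']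
    have hXd : ‖X‖ ≤ δ * ‖e‖ := by
      apply aux_sqle _ (norm_nonneg _) (mul_nonneg hδ0.le (norm_nonneg _))
      calc ‖X‖ ^ 2 ≤ δ ^ 2 * ‖e‖ ^ 2 := hX2
        _ = (δ * ‖e‖) ^ 2 := by ring
    exact hle1.trans hXd
  -- main induction
  have hu_main : ∀ n, ‖u n - u_H‖ ≤ δ ^ n * ‖u 0 - u_H‖ := by
    intro n
    induction n with
    | zero => simp
    | succ n ih =>
      calc ‖u (n + 1) - u_H‖ ≤ δ * ‖u n - u_H‖ := hcontr n
        _ ≤ δ * (δ ^ n * ‖u 0 - u_H‖) := mul_le_mul_of_nonneg_left ih hδ0.le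
        _ = δ ^ (n + 1) * ‖u 0 - u_H‖ := by ring
  intro n
  refine ⟨hu_main n, ?_, ?_⟩
  · -- bound for y
    have h1 : 0 ≤ ‖ι‖ * C_B / a_min * ‖u n - u_H‖ := by
      have h := mul_nonneg (norm_nonneg ι) (key0 (u n - u_H))
      have h2 : ‖ι‖ * C_B / a_min * ‖u n - u_H‖ = ‖ι‖ * (C_B * ‖u n - u_H‖) / a_min := by
        ring
      rw [h2]; exact div_nonneg h ha_min.le
    have h2 : 0 ≤ ‖ι‖ * C_B / a_min * (δ ^ n * ‖u 0 - u_H‖) := by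
      have h := mul_nonneg (mul_nonneg (norm_nonneg ι) (key0 (u 0 - u_H)))
        (pow_nonneg hδ0.le n)
      have h3 : ‖ι‖ * C_B / a_min * (δ ^ n * ‖u 0 - u_H‖)
          = ‖ι‖ * (C_B * ‖u 0 - u_H‖) * δ ^ n / a_min := by ring
      rw [h3]; exact div_nonneg h ha_min.le
    exact (hSY n).trans (aux_mulmono (norm_nonneg _) (hu_main n) h1 h2)
  · -- bound for p
    have h2 : 0 ≤ L_g * ‖ι‖ ^ 3 * C_B / a_min ^ 2 * (δ ^ n * ‖u 0 - u_H‖) := by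
      have h := mul_nonneg (pow_nonneg hδ0.le n) (hSP0 0)
      have h3 : L_g * ‖ι‖ ^ 3 * C_B / a_min ^ 2 * (δ ^ n * ‖u 0 - u_H‖)
          = δ ^ n * (L_g * ‖ι‖ ^ 3 * C_B / a_min ^ 2 * ‖u 0 - u_H‖) := by ring
      rw [h3]; exact h
    exact (hSP n).trans (aux_mulmono (norm_nonneg _) (hu_main n) (hSP0 n) h2)
end

section
/- Let V, Y be real Hilbert spaces, ι : V → Y a bounded linear map, and a : V × V → ℝ a bounded coercive bilinear form with coercivity constant a_min > 0. Let V_f ⊆ V be a subspace satisfying the Poincaré-type inequality ‖ι v‖_Y ≤ C_P H ‖v‖_V for all v ∈ V_f, for some constants C_P, H > 0. Let ρ ∈ Y and let z ∈ V satisfy a(z,v) = ⟪ρ, ιv⟫_Y for all v ∈ V. Suppose z_I ∈ V satisfies z − z_I ∈ V_f and a(z_I, v) = 0 for all v ∈ V_f. Then ‖z − z_I‖_V ≤ (C_P H / a_min) ‖ρ‖_Y. -/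
open scoped RealInnerProductSpace

/-! The error `e = z - z_I` lies in `V_f`, and `a(z_I, e) = 0` there, so its energy is
`a(e, e) = a(z, e) = ⟪ρ, ι e⟫ ≤ ‖ρ‖ ‖ι e‖ ≤ C_P H ‖ρ‖ ‖e‖`; coercivity bounds the energy from
below by `a_min ‖e‖²`, and dividing by `a_min ‖e‖` gives the estimate. -/

lemma le_div_of_mul_sq_le_mul {c M x : ℝ} (hc : 0 < c) (hM : 0 ≤ M) (hx : 0 ≤ x)
    (h : c * x ^ 2 ≤ M * x) : x ≤ M / c := by
  rw [le_div_iff₀ hc]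
  rcases hx.eq_or_lt with rfl | hx
  · simpa using hM
  · refine le_of_mul_le_mul_right ?_ hx
    linarith

lemma apply_sub_eq_inner_of_mem {V Y : Type*} [AddCommGroup V] [Module ℝ V]
    [NormedAddCommGroup Y] [InnerProductSpace ℝ Y] (ι : V →ₗ[ℝ] Y)
    (a : V →ₗ[ℝ] V →ₗ[ℝ] ℝ) (V_f : Submodule ℝ V) {ρ : Y} {z z_I : V}
    (hz : ∀ v : V, a z v = ⟪ρ, ι v⟫) (hzI_orth : ∀ v ∈ V_f, a z_I v = 0)
    {v : V} (hv : v ∈ V_f) : a (z - z_I) v = ⟪ρ, ι v⟫ := by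
  rw [map_sub, LinearMap.sub_apply, hz, hzI_orth v hv, sub_zero]

theorem stmt12_general
    {V Y : Type*}
    [NormedAddCommGroup V] [InnerProductSpace ℝ V]
    [NormedAddCommGroup Y] [InnerProductSpace ℝ Y]
    (ι : V →L[ℝ] Y)
    (a : V →ₗ[ℝ] V →ₗ[ℝ] ℝ)
    (a_min : ℝ)
    (ha_min : 0 < a_min)
    (hcoer : ∀ v : V, a_min * ‖v‖ ^ 2 ≤ a v v)
    (V_f : Submodule ℝ V)
    (C_P H : ℝ) (hCP : 0 < C_P) (hH : 0 < H)
    (hPoincare : ∀ v ∈ V_f, ‖ι v‖ ≤ C_P * H * ‖v‖)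
    (ρ : Y) (z z_I : V)
    (hz : ∀ v : V, a z v = ⟪ρ, ι v⟫)
    (hzI_mem : z - z_I ∈ V_f)
    (hzI_orth : ∀ v ∈ V_f, a z_I v = 0) :
    ‖z - z_I‖ ≤ C_P * H / a_min * ‖ρ‖ := by
  set e := z - z_I
  have energy_le : a_min * ‖e‖ ^ 2 ≤ C_P * H * ‖ρ‖ * ‖e‖ :=
    calc a_min * ‖e‖ ^ 2 ≤ a e e := hcoer e
      _ = ⟪ρ, ι e⟫ := apply_sub_eq_inner_of_mem (ι : V →ₗ[ℝ] Y) a V_f hz hzI_orth hzI_mem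
      _ ≤ ‖ρ‖ * ‖ι e‖ := real_inner_le_norm ρ (ι e)
      _ ≤ ‖ρ‖ * (C_P * H * ‖e‖) := by gcongr; exact hPoincare e hzI_mem
      _ = C_P * H * ‖ρ‖ * ‖e‖ := by ring
  rw [div_mul_eq_mul_div]
  exact le_div_of_mul_sq_le_mul ha_min (by positivity) (norm_nonneg e) energy_le

/-- Optimal approximation property of the GRPS interpolant (Theorem 3.2, abstract
form): if the fine space `V_f` satisfies a Poincaré-type inequality with constant
`C_P H`, then the interpolant `z_I` of the weak solution `z` satisfies
`‖z - z_I‖ ≤ (C_P H / a_min) ‖ρ‖`. -/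
theorem stmt12
    {V Y : Type*}
    [NormedAddCommGroup V] [InnerProductSpace ℝ V] [CompleteSpace V]
    [NormedAddCommGroup Y] [InnerProductSpace ℝ Y] [CompleteSpace Y]
    (ι : V →L[ℝ] Y)
    (a : V →ₗ[ℝ] V →ₗ[ℝ] ℝ)
    (a_min a_max : ℝ)
    (ha_min : 0 < a_min) (hminmax : a_min ≤ a_max)
    (hbound : ∀ v w : V, |a v w| ≤ a_max * ‖v‖ * ‖w‖)
    (hcoer : ∀ v : V, a_min * ‖v‖ ^ 2 ≤ a v v)
    (V_f : Submodule ℝ V)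
    (C_P H : ℝ) (hCP : 0 < C_P) (hH : 0 < H)
    (hPoincare : ∀ v ∈ V_f, ‖ι v‖ ≤ C_P * H * ‖v‖)
    (ρ : Y) (z z_I : V)
    (hz : ∀ v : V, a z v = ⟪ρ, ι v⟫)
    (hzI_mem : z - z_I ∈ V_f)
    (hzI_orth : ∀ v ∈ V_f, a z_I v = 0) :
    ‖z - z_I‖ ≤ C_P * H / a_min * ‖ρ‖ :=
  stmt12_general ι a a_min ha_min hcoer V_f C_P H hCP hH hPoincare ρ z z_I hz hzI_mem hzI_orth
end
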